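/- arXiv:2409.02660 — 7 statements merged into one kernel-verified Lean document; each statement's English description precedes it below -/
import Mathlib

section
/- Let S be a finite set and L : {0,1}^S → {0,1} a monotone Boolean function. Let i1, i2 be two distinct elements of S and let X = (X(i))_{i∈S} be i.i.d. Bernoulli(p) random variables. Let Y be the random configuration obtained from X by replacing both X(i1) and X(i2) with a single fresh Bernoulli(p) random variable V independent of (X(i))_{i≠i1,i2} (i.e. Y(i1)=Y(i2)=V, Y(i)=X(i) otherwise). Then P[L(X)=1] − P[L(Y)=1] = p(1−p)·( P[L^X_{i1,i2} = f_∨] − P[L^X_{i1,i2} = f_∧] ), where L^X_{i1,i2}(z1,z2) denotes L evaluated at the configuration equal to X off {i1,i2} and equal to z1 at i1 and z2 at i2, and f_∨(z1,z2)=z1∨z2, f_∧(z1,z2)=z1∧z2. -/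
/-!
Resampling one coordinate of an i.i.d. configuration from its marginal does not change the
law, so both probabilities can be computed by first fixing the coordinates off `{i1, i2}`.
For the resulting restriction `g` of `L`,
`E g(X i1, X i2) - E g(V, V) = p (1 - p) (g(0,1) + g(1,0) - g(0,0) - g(1,1))`,
and among the six monotone `g : {0,1}² → {0,1}` the bracket is `1` for `f_∨`, `-1` for `f_∧`
and `0` for the constants and the projections.
-/

open Finset Function

section Resampling

variable {S α R : Type*} [Fintype S] [DecidableEq S] [CommSemiring R]

theorem prod_comp_update_mul_apply (μ : α → R) (x : S → α) (i : S) (c : α) :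
    (∏ j, μ (update x i c j)) * μ (x i) = (∏ j, μ (x j)) * μ c := by
  have split : ∀ d, ∏ j, μ (update x i d j) = μ d * ∏ j ∈ univ \ {i}, μ (x j) := by
    intro d
    simp_rw [apply_update (fun _ => μ)]
    exact prod_update_of_mem (mem_univ i) _ _
  conv_rhs => rw [← update_eq_self i x]
  rw [split, split]
  ring

theorem sum_prod_mul_sum_mul_update [Fintype α] (μ : α → R) (hμ : ∑ c, μ c = 1) (i : S)
    (F : (S → α) → R) :
    ∑ x : S → α, (∏ j, μ (x j)) * ∑ c, μ c * F (update x i c)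
      = ∑ x : S → α, (∏ j, μ (x j)) * F x := by
  let σ : Equiv.Perm ((S → α) × α) :=
    Involutive.toPerm (fun q => (update q.1 i q.2, q.1 i)) fun q => by simp
  calc ∑ x : S → α, (∏ j, μ (x j)) * ∑ c, μ c * F (update x i c)
      = ∑ q : (S → α) × α, (∏ j, μ (q.1 j)) * μ q.2 * F (update q.1 i q.2) := by
        simp only [Fintype.sum_prod_type, mul_sum, mul_assoc]
    _ = ∑ q : (S → α) × α, (∏ j, μ (update q.1 i q.2 j)) * μ (q.1 i) * F q.1 :=
        Fintype.sum_equiv σ _ _ fun ⟨x, c⟩ => by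
          change _ = (∏ j, μ (update (update x i c) i (x i) j)) * μ (update x i c i) *
            F (update x i c)
          simp
    _ = ∑ x : S → α, (∏ j, μ (x j)) * F x := by
        simp only [prod_comp_update_mul_apply, Fintype.sum_prod_type, mul_right_comm _ _ (F _),
          ← mul_sum, hμ, mul_one]

end Resampling

section TwoPoints

variable {R : Type*}

theorem sum_bool_mul_sum_bool_sub_sum_diag [CommRing R] (μ : Bool → R) (hμ : ∑ c, μ c = 1)
    (G : Bool → Bool → R) :
    ∑ a, μ a * ∑ b, μ b * G a b - ∑ v, μ v * G v v
      = μ true * μ false * (G false true + G true false - G false false - G true true) := by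
  simp only [Fintype.sum_bool] at hμ ⊢
  linear_combination (μ true * G true true + μ false * G false false) * hμ

theorem ite_cross_sub_ite_diag_of_monotone [Ring R] (g : Bool → Bool → Bool)
    (hg : Monotone (uncurry g)) :
    ((if g false true then 1 else 0) + (if g true false then 1 else 0)
        - (if g false false then 1 else 0) - (if g true true then 1 else 0) : R)
      = (if ∀ z1 z2, g z1 z2 = (z1 || z2) then 1 else 0)
        - (if ∀ z1 z2, g z1 z2 = (z1 && z2) then 1 else 0) := by
  have h00_01 : g false false ≤ g false true :=
    hg (a := (false, false)) (b := (false, true)) (by decide)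
  have h00_10 : g false false ≤ g true false :=
    hg (a := (false, false)) (b := (true, false)) (by decide)
  have h01_11 : g false true ≤ g true true :=
    hg (a := (false, true)) (b := (true, true)) (by decide)
  have h10_11 : g true false ≤ g true true :=
    hg (a := (true, false)) (b := (true, true)) (by decide)
  simp only [Bool.forall_bool, Bool.false_or, Bool.true_or, Bool.false_and, Bool.true_and]
  revert h00_01 h00_10 h01_11 h10_11
  cases g false false <;> cases g false true <;> cases g true false <;> cases g true true <;> simp

end TwoPoints

theorem sum_sub_sum_contract_eq_of_monotone {S R : Type*} [Fintype S] [DecidableEq S]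
    [CommRing R] (L : (S → Bool) → Bool) (hL : Monotone L) (i1 i2 : S) (μ : Bool → R)
    (hμ : ∑ c, μ c = 1) :
    (∑ x : S → Bool, (∏ i, μ (x i)) * (if L x then 1 else 0))
      - (∑ x : S → Bool, ∑ v : Bool, ((∏ i, μ (x i)) * μ v) *
          (if L (update (update x i1 v) i2 v) then 1 else 0))
    = μ true * μ false *
      ((∑ x : S → Bool, (∏ i, μ (x i)) *
          (if ∀ z1 z2 : Bool, L (update (update x i1 z1) i2 z2) = (z1 || z2) then 1 else 0))
        - (∑ x : S → Bool, (∏ i, μ (x i)) *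
          (if ∀ z1 z2 : Bool, L (update (update x i1 z1) i2 z2) = (z1 && z2) then 1 else 0)))
    := by
  have resample_both : ∀ F : (S → Bool) → R, ∑ x : S → Bool, (∏ i, μ (x i)) * F x
      = ∑ x : S → Bool, (∏ i, μ (x i)) *
          ∑ a, μ a * ∑ b, μ b * F (update (update x i1 a) i2 b) :=
    fun F => ((sum_prod_mul_sum_mul_update μ hμ i1 _).trans
      (sum_prod_mul_sum_mul_update μ hμ i2 F)).symm
  have restriction_monotone : ∀ x : S → Bool,
      Monotone (uncurry fun a b => L (update (update x i1 a) i2 b)) := fun x _ _ h =>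
    hL (update_le_update_iff.2 ⟨h.2, fun j _ => update_le_update_iff'.2 h.1 j⟩)
  rw [resample_both, ← sum_sub_distrib, mul_sub, mul_sum, mul_sum, ← sum_sub_distrib]
  refine sum_congr rfl fun x _ => ?_
  simp only [mul_assoc, ← mul_sum, ← mul_sub]
  rw [sum_bool_mul_sum_bool_sub_sum_diag μ hμ,
    ite_cross_sub_ite_diag_of_monotone _ (restriction_monotone x)]
  ring

theorem stmt_0_general {S : Type*} [Fintype S] [DecidableEq S]
    (L : (S → Bool) → Bool) (hL : Monotone L)
    (i1 i2 : S) (p : ℝ) :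
    (∑ x : S → Bool, (∏ i, if x i then p else 1 - p) * (if L x then 1 else 0))
      - (∑ x : S → Bool, ∑ v : Bool,
          ((∏ i, if x i then p else 1 - p) * (if v then p else 1 - p)) *
            (if L (Function.update (Function.update x i1 v) i2 v) then 1 else 0))
    = p * (1 - p) *
      ((∑ x : S → Bool, (∏ i, if x i then p else 1 - p) *
          (if ∀ z1 z2 : Bool,
              L (Function.update (Function.update x i1 z1) i2 z2) = (z1 || z2)
            then 1 else 0))
        - (∑ x : S → Bool, (∏ i, if x i then p else 1 - p) *
          (if ∀ z1 z2 : Bool,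
              L (Function.update (Function.update x i1 z1) i2 z2) = (z1 && z2)
            then 1 else 0))) :=
  sum_sub_sum_contract_eq_of_monotone L hL i1 i2 (fun b => if b then p else 1 - p) (by simp)

/-- contraction of two points lemma for monotone Boolean functions
applied to i.i.d. Bernoulli(p) input. -/
theorem stmt_0 {S : Type*} [Fintype S] [DecidableEq S]
    (L : (S → Bool) → Bool) (hL : Monotone L)
    (i1 i2 : S) (h12 : i1 ≠ i2) (p : ℝ) (hp0 : 0 ≤ p) (hp1 : p ≤ 1) :
    (∑ x : S → Bool, (∏ i, if x i then p else 1 - p) * (if L x then 1 else 0))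
      - (∑ x : S → Bool, ∑ v : Bool,
          ((∏ i, if x i then p else 1 - p) * (if v then p else 1 - p)) *
            (if L (Function.update (Function.update x i1 v) i2 v) then 1 else 0))
    = p * (1 - p) *
      ((∑ x : S → Bool, (∏ i, if x i then p else 1 - p) *
          (if ∀ z1 z2 : Bool,
              L (Function.update (Function.update x i1 z1) i2 z2) = (z1 || z2)
            then 1 else 0))
        - (∑ x : S → Bool, (∏ i, if x i then p else 1 - p) *
          (if ∀ z1 z2 : Bool,
              L (Function.update (Function.update x i1 z1) i2 z2) = (z1 && z2)
            then 1 else 0))) :=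
  stmt_0_general L hL i1 i2 p
end

section
/- Let S, T be finite sets, L : {0,1}^S → {0,1} a monotone Boolean function, and ψ : S → T a function such that |ψ(A)| = |A| for every minimal one-set A of L (i.e. ψ is injective on each minimal one-set). Let X = (X(i))_{i∈S} and Y = (Y(j))_{j∈T} be i.i.d. collections of Bernoulli(p) random variables. Then P[L(Y∘ψ) = 1] ≤ P[L(X) = 1]. -/
open Finset

noncomputable section Stmt2Aux

/-- product Bernoulli weight -/
def stmt2W {α : Type*} [Fintype α] (p : ℝ) (x : α → Bool) : ℝ :=
  ∏ i, if x i then p else 1 - p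

/-- expectation of a Boolean function under product Bernoulli -/
def stmt2E {α : Type*} [Fintype α] [DecidableEq α] (p : ℝ) (f : (α → Bool) → Bool) : ℝ :=
  ∑ x : α → Bool, stmt2W p x * (if f x then 1 else 0)

lemma stmt2W_nonneg {α : Type*} [Fintype α] {p : ℝ} (hp0 : 0 ≤ p) (hp1 : p ≤ 1)
    (x : α → Bool) : 0 ≤ stmt2W p x := by
  refine Finset.prod_nonneg fun i _ => ?_
  by_cases h : x i <;> simp [h] <;> linarith

lemma stmt2W_sum {α : Type*} [Fintype α] [DecidableEq α] (p : ℝ) :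
    ∑ x : α → Bool, stmt2W p x = 1 := by
  unfold stmt2W
  rw [← Fintype.prod_sum (fun (_ : α) (b : Bool) => if b then p else 1 - p)]
  simp

lemma stmt2_exists_minimal {α : Type*} [Fintype α] [DecidableEq α]
    (L : (α → Bool) → Bool) :
    ∀ W : Finset α, L (fun i => if i ∈ W then true else false) = true →
      ∃ A : Finset α, A ⊆ W ∧ L (fun i => if i ∈ A then true else false) = true ∧
        ∀ B : Finset α, B ⊂ A → L (fun i => if i ∈ B then true else false) = false := by
  intro W
  induction W using Finset.strongInduction with
  | _ W ih =>
    intro h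
    by_cases hall : ∀ B : Finset α, B ⊂ W → L (fun i => if i ∈ B then true else false) = false
    · exact ⟨W, subset_rfl, h, hall⟩
    · push_neg at hall
      obtain ⟨B, hBW, hB⟩ := hall
      obtain ⟨A, hAB, h1, h2⟩ := ih B hBW (by simpa using hB)
      exact ⟨A, hAB.trans hBW.subset, h1, h2⟩

noncomputable section Stmt2Aux2

variable {U V : Type*} [Fintype U] [DecidableEq U] [Fintype V] [DecidableEq V]

def stmt2Split (e : U → V) (he : Function.Injective e) :
    (V → Bool) ≃ (U → Bool) × ({ v : V // v ∉ Set.range e } → Bool) := by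
  classical
  exact
  { toFun := fun v => (fun u => v (e u), fun c => v c.1)
    invFun := fun z v => if h : v ∈ Set.range e then z.1 h.choose else z.2 ⟨v, h⟩
    left_inv := by
      intro v; funext v'
      by_cases h : v' ∈ Set.range e
      · simp only [dif_pos h]; rw [h.choose_spec]
      · simp only [dif_neg h]
    right_inv := by
      intro z
      refine Prod.ext ?_ ?_
      · funext u'
        have h : e u' ∈ Set.range e := ⟨u', rfl⟩
        simp only [dif_pos h]
        exact congrArg z.1 (he h.choose_spec)
      · funext c
        simp only [dif_neg c.2] }

set_option linter.unusedSectionVars false in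
lemma stmt2Split_symm_comp (e : U → V) (he : Function.Injective e)
    (z : (U → Bool) × ({ v : V // v ∉ Set.range e } → Bool)) (u' : U) :
    (stmt2Split e he).symm z (e u') = z.1 u' :=
  congrFun (congrArg Prod.fst ((stmt2Split e he).right_inv z)) u'

set_option linter.unusedSectionVars false in
set_option linter.unusedSectionVars false in
lemma stmt2Split_symm_compl (e : U → V) (he : Function.Injective e)
    (z : (U → Bool) × ({ v : V // v ∉ Set.range e } → Bool))
    (c : { v : V // v ∉ Set.range e }) :
    (stmt2Split e he).symm z c.1 = z.2 c :=
  congrFun (congrArg Prod.snd ((stmt2Split e he).right_inv z)) c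

def stmt2SumEquiv (e : U → V) (he : Function.Injective e) :
    U ⊕ { v : V // v ∉ Set.range e } ≃ V :=
  Equiv.ofBijective (Sum.elim e Subtype.val) (by
    constructor
    · intro a b hab
      cases a with
      | inl a => cases b with
        | inl b => exact congrArg Sum.inl (he hab)
        | inr b => exact absurd ⟨a, hab⟩ b.2
      | inr a => cases b with
        | inl b => exact absurd ⟨b, hab.symm⟩ a.2
        | inr b => exact congrArg Sum.inr (Subtype.ext hab)
    · intro v
      by_cases h : v ∈ Set.range e
      · exact ⟨Sum.inl h.choose, h.choose_spec⟩
      · exact ⟨Sum.inr ⟨v, h⟩, rfl⟩)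

lemma stmt2_push (p : ℝ) (e : U → V) (he : Function.Injective e)
    (G : (U → Bool) → Bool) :
    ∑ v : V → Bool, stmt2W p v * (if G (fun u => v (e u)) then 1 else 0)
      = stmt2E p G := by
  classical
  let B : U ⊕ { v : V // v ∉ Set.range e } ≃ V := stmt2SumEquiv e he
  rw [← Equiv.sum_comp (stmt2Split e he).symm
    (fun v => stmt2W p v * (if G (fun u => v (e u)) then 1 else 0))]
  have key : ∀ z : (U → Bool) × ({ v : V // v ∉ Set.range e } → Bool),
      stmt2W p ((stmt2Split e he).symm z) * (if G (fun u => (stmt2Split e he).symm z (e u)) then 1 else 0)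
      = (stmt2W p z.1 * (if G z.1 then 1 else 0)) * stmt2W p z.2 := by
    intro z
    have h1 : (fun u => (stmt2Split e he).symm z (e u)) = z.1 := by
      funext u'; exact stmt2Split_symm_comp e he z u'
    have h2 : stmt2W p ((stmt2Split e he).symm z) = stmt2W p z.1 * stmt2W p z.2 := by
      unfold stmt2W
      rw [← Equiv.prod_comp B (fun v => if (stmt2Split e he).symm z v then p else 1 - p)]
      rw [Fintype.prod_sum_type]
      congr 1
      · refine Finset.prod_congr rfl fun u' _ => ?_
        rw [show B (Sum.inl u') = e u' from rfl, stmt2Split_symm_comp e he z u']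
      · refine Finset.prod_congr rfl fun c _ => ?_
        rw [show B (Sum.inr c) = c.1 from rfl, stmt2Split_symm_compl e he z c]
    rw [h1, h2]; ring
  rw [Finset.sum_congr rfl fun z _ => key z]
  rw [Fintype.sum_prod_type]
  unfold stmt2E
  refine Finset.sum_congr rfl fun u _ => ?_
  have hy : ∀ y : { v : V // v ∉ Set.range e } → Bool,
      (stmt2W p ((u, y) : (U → Bool) × _).1 * (if G ((u, y) : (U → Bool) × _).1 then (1:ℝ) else 0))
        * stmt2W p ((u, y) : (U → Bool) × _).2
      = (stmt2W p u * (if G u then 1 else 0)) * stmt2W p y := fun y => rfl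
  rw [Finset.sum_congr rfl fun y _ => hy y, ← Finset.mul_sum, stmt2W_sum, mul_one]

end Stmt2Aux2

section Stmt2Step
variable {α : Type*} [Fintype α] [DecidableEq α]

set_option maxHeartbeats 1000000 in
lemma stmt2_step (p : ℝ) (hp0 : 0 ≤ p) (hp1 : p ≤ 1)
    (L : (α → Bool) → Bool) (hL : Monotone L) (i i' : α) (hii : i ≠ i')
    (hstar : ∀ x : α → Bool, x i = true → x i' = true → L x = true →
      L (Function.update x i' false) = true ∨ L (Function.update x i false) = true) :
    stmt2E p (fun x => L (Function.update x i' (x i))) ≤ stmt2E p L := by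
  classical
  set f : (α → Bool) → ℝ := fun x => if L x then 1 else 0 with hf
  have fnn : ∀ x, 0 ≤ f x := by intro x; by_cases h : L x <;> simp [hf, h]
  -- the double update
  set u : (α → Bool) → Bool → Bool → (α → Bool) :=
    fun z a b => Function.update (Function.update z i a) i' b with hu
  -- key two-point inequality
  have key2 : ∀ z : α → Bool,
      f (u z true true) + f (u z false false) ≤ f (u z true false) + f (u z false true) := by
    intro z
    by_cases h00 : L (u z false false) = true
    · have hall : ∀ a b : Bool, L (u z a b) = true := by
        intro a b
        have hle : u z false false ≤ u z a b := by
          intro j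
          by_cases hj' : j = i'
          · subst hj'; simp [hu, Function.update_self]
          · by_cases hj : j = i
            · subst hj
              simp [hu, Function.update_of_ne hj', Function.update_self]
            · simp [hu, Function.update_of_ne hj', Function.update_of_ne hj]
        have := hL hle
        rw [h00] at this
        exact Bool.le_iff_imp.mp this rfl
      simp [hf, hall]
    · by_cases h11 : L (u z true true) = true
      · have hv1 : (u z true true) i = true := by
          simp [hu, Function.update_of_ne hii, Function.update_self]
        have hv2 : (u z true true) i' = true := by simp [hu, Function.update_self]
        have eA : Function.update (u z true true) i' false = u z true false := by
          simp [hu, Function.update_idem]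
        have eB : Function.update (u z true true) i false = u z false true := by
          funext j
          simp only [hu, Function.update_apply]
          by_cases h1 : j = i <;> by_cases h2 : j = i' <;> simp_all
        have e0 : L (u z false false) = false := by simpa using h00
        rcases hstar (u z true true) hv1 hv2 h11 with h | h
        · rw [eA] at h
          simp only [hf, h11, h, e0]
          norm_num
          positivity
        · rw [eB] at h
          simp only [hf, h11, h, e0]
          norm_num
          positivity
      · have e1 : L (u z true true) = false := by simpa using h11
        have e0 : L (u z false false) = false := by simpa using h00
        simp only [hf, e1, e0]
        norm_num
        positivity
  have key2' : ∀ (z : α → Bool) (a b : Bool),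
      f (u z a a) + f (u z b b) ≤ f (u z a b) + f (u z b a) := by
    intro z a b
    cases a <;> cases b
    · exact le_refl _
    · linarith [key2 z]
    · exact key2 z
    · exact le_refl _
  let τ : (α → Bool) ≃ (α → Bool) :=
    { toFun := fun x => x ∘ Equiv.swap i i'
      invFun := fun x => x ∘ Equiv.swap i i'
      left_inv := fun x => by funext j; simp [Equiv.swap_apply_self]
      right_inv := fun x => by funext j; simp [Equiv.swap_apply_self] }
  have hWτ : ∀ x, stmt2W p (τ x) = stmt2W p x := by
    intro x
    exact Equiv.prod_comp (Equiv.swap i i') (fun j => if x j then p else 1 - p)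
  have hpt : ∀ x : α → Bool,
      f (Function.update x i' (x i)) + f (Function.update (τ x) i' (τ x i))
        ≤ f x + f (τ x) := by
    intro x
    have h1 : Function.update x i' (x i) = u x (x i) (x i) := by
      funext j
      simp only [hu, Function.update_apply]
      by_cases hj : j = i <;> by_cases hj' : j = i' <;> simp_all
    have h2 : Function.update (τ x) i' (τ x i) = u x (x i') (x i') := by
      funext j
      have hτ : ∀ k, τ x k = x (Equiv.swap i i' k) := fun k => rfl
      rcases eq_or_ne j i' with rfl | hj'
      · simp [hu, Function.update_self, hτ, Equiv.swap_apply_left]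
      · rcases eq_or_ne j i with rfl | hj
        · simp [hu, Function.update_of_ne hj', hτ, Equiv.swap_apply_left,
            Function.update_of_ne hii, Function.update_self]
        · simp [hu, Function.update_of_ne hj', Function.update_of_ne hj, hτ,
            Equiv.swap_apply_of_ne_of_ne hj hj']
    have h3 : x = u x (x i) (x i') := by
      funext j
      simp only [hu, Function.update_apply]
      by_cases hj : j = i <;> by_cases hj' : j = i' <;> simp_all
    have h4 : τ x = u x (x i') (x i) := by
      funext j
      have hτ : ∀ k, τ x k = x (Equiv.swap i i' k) := fun k => rfl
      rcases eq_or_ne j i' with rfl | hj'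
      · simp [hu, Function.update_self, hτ, Equiv.swap_apply_right]
      · rcases eq_or_ne j i with rfl | hj
        · simp [hu, Function.update_of_ne hj', hτ, Equiv.swap_apply_left,
            Function.update_self]
        · simp [hu, Function.update_of_ne hj', Function.update_of_ne hj, hτ,
            Equiv.swap_apply_of_ne_of_ne hj hj']
    have hk := key2' x (x i) (x i')
    rw [h1, h2, show f x = f (u x (x i) (x i')) from congrArg f h3,
      show f (τ x) = f (u x (x i') (x i)) from congrArg f h4]
    exact hk
  have hA2 : (∑ x : α → Bool, stmt2W p x * f (Function.update x i' (x i)))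
      = ∑ x : α → Bool, stmt2W p x * f (Function.update (τ x) i' (τ x i)) := by
    rw [← Equiv.sum_comp τ (fun x => stmt2W p x * f (Function.update x i' (x i)))]
    exact Finset.sum_congr rfl fun x _ => by rw [hWτ]
  have hB2 : (∑ x : α → Bool, stmt2W p x * f x)
      = ∑ x : α → Bool, stmt2W p x * f (τ x) := by
    rw [← Equiv.sum_comp τ (fun x => stmt2W p x * f x)]
    exact Finset.sum_congr rfl fun x _ => by rw [hWτ]
  have main : (∑ x : α → Bool, stmt2W p x * f (Function.update x i' (x i)))
      + (∑ x : α → Bool, stmt2W p x * f (Function.update x i' (x i)))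
      ≤ (∑ x : α → Bool, stmt2W p x * f x) + (∑ x : α → Bool, stmt2W p x * f x) := by
    nth_rewrite 2 [hA2]
    nth_rewrite 2 [hB2]
    rw [← Finset.sum_add_distrib, ← Finset.sum_add_distrib]
    refine Finset.sum_le_sum fun x _ => ?_
    rw [← mul_add, ← mul_add]
    exact mul_le_mul_of_nonneg_left (hpt x) (stmt2W_nonneg hp0 hp1 x)
  have eL : stmt2E p (fun x => L (Function.update x i' (x i)))
      = ∑ x : α → Bool, stmt2W p x * f (Function.update x i' (x i)) := rfl
  have eR : stmt2E p L = ∑ x : α → Bool, stmt2W p x * f x := rfl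
  rw [eL, eR]
  linarith
end Stmt2Step


/-- if ψ is injective on every minimal one-set of the monotone Boolean
function L, then P[L(Y∘ψ)=1] ≤ P[L(X)=1] for i.i.d. Bernoulli(p) collections X, Y. -/
theorem stmt_2 {S T : Type*} [Fintype S] [DecidableEq S] [Fintype T] [DecidableEq T]
    (L : (S → Bool) → Bool) (hL : Monotone L) (ψ : S → T)
    (hψ : ∀ A : Finset S,
      L (fun i => if i ∈ A then true else false) = true →
      (∀ B : Finset S, B ⊂ A → L (fun i => if i ∈ B then true else false) = false) →
      (A.image ψ).card = A.card)
    (p : ℝ) (hp0 : 0 ≤ p) (hp1 : p ≤ 1) :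
    (∑ y : T → Bool, (∏ j, if y j then p else 1 - p) *
        (if L (fun i => y (ψ i)) then 1 else 0))
      ≤ ∑ x : S → Bool, (∏ i, if x i then p else 1 - p) * (if L x then 1 else 0) := by
  classical
  have hmem : ∀ j : S, ψ j ∈ Finset.univ.image ψ :=
    fun j => Finset.mem_image_of_mem ψ (Finset.mem_univ j)
  set R : Finset T := Finset.univ.image ψ with hR
  have hsex : ∀ t : ↥R, ∃ j : S, ψ j = t.1 := by
    intro t
    obtain ⟨j, -, hj⟩ := Finset.mem_image.mp t.2
    exact ⟨j, hj⟩
  choose s hs using hsex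
  set r : S → S := fun j => s ⟨ψ j, hmem j⟩ with hrdef
  have hr1 : ∀ j, ψ (r j) = ψ j := fun j => hs _
  have hr2 : ∀ j, r (r j) = r j := by
    intro j
    show s ⟨ψ (r j), _⟩ = r j
    congr 1
    exact Subtype.ext (hr1 j)
  have hsinj : Function.Injective s := by
    intro t1 t2 h
    apply Subtype.ext
    rw [← hs t1, ← hs t2, h]
  set N : Finset S := Finset.univ.filter (fun j => r j ≠ j) with hN
  -- the gluing induction
  have glue : ∀ F : Finset S, F ⊆ N →
      stmt2E p (fun x : S → Bool => L (fun j => x (if j ∈ F then r j else j)))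
        ≤ stmt2E p L := by
    intro F
    induction F using Finset.induction_on with
    | empty =>
      intro _
      have he : (fun x : S → Bool => L (fun j => x (if j ∈ (∅ : Finset S) then r j else j)))
          = L := by
        funext x
        congr 1
      rw [he]
    | @insert i' F hnot ih =>
      intro hsub
      have hFN : F ⊆ N := fun j hj => hsub (Finset.mem_insert_of_mem hj)
      have hi'N : i' ∈ N := hsub (Finset.mem_insert_self i' F)
      have hri' : r i' ≠ i' := (Finset.mem_filter.mp hi'N).2
      set i : S := r i' with hidef
      have hii : i ≠ i' := hri'
      have hrii : r i = i := hr2 i'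
      have hiF : i ∉ F := by
        intro h
        exact (Finset.mem_filter.mp (hFN h)).2 hrii
      have hBfact : ∀ j, (if j ∈ F then r j else j) = i' → j = i' := by
        intro j hj
        by_cases hjF : j ∈ F
        · exfalso
          rw [if_pos hjF] at hj
          apply hri'
          calc r i' = r (r j) := by rw [hj]
          _ = r j := hr2 j
          _ = i' := hj
        · rwa [if_neg hjF] at hj
      have hCfact : ∀ j, (if j ∈ F then r j else j) = i → ψ j = ψ i := by
        intro j hj
        by_cases hjF : j ∈ F
        · rw [if_pos hjF] at hj
          rw [← hj, hr1 j]
        · rw [if_neg hjF] at hj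
          rw [hj]
      have hψi' : ψ i' = ψ i := (hr1 i').symm
      -- the one-step function
      have hmono : Monotone (fun x : S → Bool => L (fun j => x (if j ∈ F then r j else j))) :=
        fun x y hxy => hL (fun j => hxy (if j ∈ F then r j else j))
      have hstar : ∀ x : S → Bool, x i = true → x i' = true →
          L (fun j => x (if j ∈ F then r j else j)) = true →
          L (fun j => Function.update x i' false (if j ∈ F then r j else j)) = true ∨
          L (fun j => Function.update x i false (if j ∈ F then r j else j)) = true := by
        intro x hxi hxi' hLx
        set u : S → Bool := fun j => x (if j ∈ F then r j else j) with hu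
        set Wfin : Finset S := Finset.univ.filter (fun j => u j = true) with hW
        have hWind : (fun j => if j ∈ Wfin then true else false) = u := by
          funext j
          cases hj : u j <;> simp [hW, hj]
        obtain ⟨A, hAW, hA1, hA2⟩ := stmt2_exists_minimal L Wfin (by rw [hWind]; exact hLx)
        have hinj : Set.InjOn ψ ↑A := Finset.card_image_iff.mp (hψ A hA1 hA2)
        have hAu : ∀ a ∈ A, u a = true := fun a ha => (Finset.mem_filter.mp (hAW ha)).2
        by_cases hi'A : i' ∈ A
        · right
          have hle : (fun j => if j ∈ A then true else false)
              ≤ (fun j => Function.update x i false (if j ∈ F then r j else j)) := by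
            intro j
            by_cases hjA : j ∈ A
            · have hne : (if j ∈ F then r j else j) ≠ i := by
                intro h
                have hψj : ψ j = ψ i' := by rw [hCfact j h, hψi']
                have hji' : j = i' := hinj hjA hi'A hψj
                rw [hji'] at h
                rw [if_neg hnot] at h
                exact hii h.symm
              have hval : Function.update x i false (if j ∈ F then r j else j) = true := by
                rw [Function.update_of_ne hne]
                exact hAu j hjA
              simp [hjA, hval]
            · simp [hjA]
          have hmle := hL hle
          rw [hA1] at hmle
          exact Bool.le_iff_imp.mp hmle rfl
        · left
          have hle : (fun j => if j ∈ A then true else false)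
              ≤ (fun j => Function.update x i' false (if j ∈ F then r j else j)) := by
            intro j
            by_cases hjA : j ∈ A
            · have hne : (if j ∈ F then r j else j) ≠ i' := by
                intro h
                exact hi'A (hBfact j h ▸ hjA)
              have hval : Function.update x i' false (if j ∈ F then r j else j) = true := by
                rw [Function.update_of_ne hne]
                exact hAu j hjA
              simp [hjA, hval]
            · simp [hjA]
          have hmle := hL hle
          rw [hA1] at hmle
          exact Bool.le_iff_imp.mp hmle rfl
      -- composition identity
      have hcomp : (fun x : S → Bool => L (fun j => x (if j ∈ insert i' F then r j else j)))
          = (fun x : S → Bool =>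
              (fun y : S → Bool => L (fun j => y (if j ∈ F then r j else j)))
                (Function.update x i' (x i))) := by
        funext x
        congr 1
        funext j
        by_cases hjF : j ∈ F
        · have hrj : r j ≠ i' := by
            intro h
            have := hBfact j (by rw [if_pos hjF]; exact h)
            rw [this] at hjF
            exact hnot hjF
          rw [if_pos hjF, if_pos (Finset.mem_insert_of_mem hjF), Function.update_of_ne hrj]
        · by_cases hji' : j = i'
          · subst hji'
            rw [if_neg hjF, if_pos (Finset.mem_insert_self _ _), Function.update_self]
          · have : j ∉ insert i' F := by
              simp [hji', hjF]
            rw [if_neg hjF, if_neg this, Function.update_of_ne hji']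
      calc stmt2E p (fun x : S → Bool => L (fun j => x (if j ∈ insert i' F then r j else j)))
          = stmt2E p (fun x : S → Bool =>
              (fun y : S → Bool => L (fun j => y (if j ∈ F then r j else j)))
                (Function.update x i' (x i))) := by rw [hcomp]
        _ ≤ stmt2E p (fun y : S → Bool => L (fun j => y (if j ∈ F then r j else j))) :=
            stmt2_step p hp0 hp1 _ hmono i i' hii hstar
        _ ≤ stmt2E p L := ih hFN
  -- final assembly
  have e1 : (∑ y : T → Bool, stmt2W p y * (if L (fun i => y (ψ i)) then (1:ℝ) else 0))
      = stmt2E p (fun z : ↥R → Bool => L (fun j => z ⟨ψ j, hmem j⟩)) := by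
    rw [← stmt2_push p (Subtype.val : ↥R → T) Subtype.val_injective
      (fun z => L (fun j => z ⟨ψ j, hmem j⟩))]
  have e2 : stmt2E p (fun z : ↥R → Bool => L (fun j => z ⟨ψ j, hmem j⟩))
      = ∑ x : S → Bool, stmt2W p x * (if L (fun j => x (r j)) then (1:ℝ) else 0) := by
    rw [← stmt2_push p s hsinj (fun z => L (fun j => z ⟨ψ j, hmem j⟩))]
  have e3 : (fun x : S → Bool => L (fun j => x (r j)))
      = (fun x : S → Bool => L (fun j => x (if j ∈ N then r j else j))) := by
    funext x
    congr 1
    funext j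
    by_cases hj : j ∈ N
    · rw [if_pos hj]
    · rw [if_neg hj]
      have : ¬ r j ≠ j := by
        intro h
        exact hj (Finset.mem_filter.mpr ⟨Finset.mem_univ j, h⟩)
      rw [not_not.mp this]
  show (∑ y : T → Bool, stmt2W p y * (if L (fun i => y (ψ i)) then (1:ℝ) else 0))
      ≤ ∑ x : S → Bool, stmt2W p x * (if L x then (1:ℝ) else 0)
  rw [e1, e2]
  have : (∑ x : S → Bool, stmt2W p x * (if L (fun j => x (r j)) then (1:ℝ) else 0))
      = stmt2E p (fun x : S → Bool => L (fun j => x (if j ∈ N then r j else j))) := by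
    unfold stmt2E
    rw [← e3]
  rw [this]
  exact glue N subset_rfl
end Stmt2Aux
end

section
/- Let S, T be finite sets, L : {0,1}^S → {0,1} a monotone Boolean function, and ψ : S → T such that |ψ(Z)| = |Z| for every minimal zero-set Z of L. Let X = (X(i))_{i∈S} and Y = (Y(j))_{j∈T} be i.i.d. Bernoulli(p) collections. Then P[L(Y∘ψ) = 1] ≥ P[L(X) = 1]. -/
/-!
Identifying two coordinates `s₁ ≠ s₂` that lie in no common minimal zero-set of `L` can only
increase `P[L = 1]`. Indeed, pair `x` with `x ∘ swap s₁ s₂`: on the coordinates `s₁, s₂` the two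
merged configurations are the join and the meet of this pair, `L` is monotone, and
`L x = L (x ∘ swap) = 1` forces `L = 1` on the meet, since otherwise a minimal zero-set below the
meet would contain both coordinates.

If `ψ s₁ = ψ s₂` with `s₁ ≠ s₂`, then `L (y ∘ ψ) = L' (y ∘ ψ')`, where `L'` merges `s₂` into `s₁`
and `ψ'` agrees with `ψ` except that it sends `s₂` to a fresh point. The map `ψ'` is again
injective on the minimal zero-sets of `L'` and has a larger image, so induction reduces the
theorem to injective `ψ`, for which `y ∘ ψ` is itself an i.i.d. Bernoulli family.
-/

open Finset Function

section Bernoulli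

variable {A B : Type*} [Fintype A] [Fintype B]

def bernoulliWeight (p : ℝ) (x : A → Bool) : ℝ := ∏ i, if x i then p else 1 - p

lemma bernoulliWeight_nonneg {p : ℝ} (hp0 : 0 ≤ p) (hp1 : p ≤ 1) (x : A → Bool) :
    0 ≤ bernoulliWeight p x :=
  prod_nonneg fun i _ => by split <;> linarith

variable [DecidableEq A] [DecidableEq B]

def bernoulliExpect (p : ℝ) (F : (A → Bool) → ℝ) : ℝ := ∑ x, bernoulliWeight p x * F x

def probTrue (p : ℝ) (L : (A → Bool) → Bool) : ℝ :=
  bernoulliExpect p fun x => if L x then 1 else 0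

lemma sum_bernoulliWeight (p : ℝ) : ∑ x : A → Bool, bernoulliWeight p x = 1 := by
  simp only [bernoulliWeight]
  rw [← Fintype.prod_sum fun (_ : A) (b : Bool) => if b then p else 1 - p]
  simp

lemma bernoulliExpect_add (p : ℝ) (F G : (A → Bool) → ℝ) :
    bernoulliExpect p (fun x => F x + G x) = bernoulliExpect p F + bernoulliExpect p G := by
  simp only [bernoulliExpect, mul_add, sum_add_distrib]

lemma bernoulliExpect_mono {p : ℝ} (hp0 : 0 ≤ p) (hp1 : p ≤ 1) {F G : (A → Bool) → ℝ}
    (h : F ≤ G) : bernoulliExpect p F ≤ bernoulliExpect p G :=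
  sum_le_sum fun x _ => mul_le_mul_of_nonneg_left (h x) (bernoulliWeight_nonneg hp0 hp1 x)

lemma bernoulliExpect_comp_equiv (p : ℝ) (e : A ≃ B) (F : (A → Bool) → ℝ) :
    bernoulliExpect p (fun y : B → Bool => F (y ∘ e)) = bernoulliExpect p F := by
  refine Fintype.sum_equiv (e.symm.arrowCongr (Equiv.refl Bool)) _ _ fun y => ?_
  simp only [bernoulliWeight, ← e.prod_comp fun b => if y b then p else 1 - p]
  rfl

lemma bernoulliExpect_restrict (p : ℝ) (P : B → Prop) [DecidablePred P]
    (F : ({b // P b} → Bool) → ℝ) :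
    bernoulliExpect p (fun y : B → Bool => F fun b => y b) = bernoulliExpect p F := by
  set e := Equiv.piEquivPiSubtypeProd P fun _ => Bool
  have hweight : ∀ u v, bernoulliWeight p (e.symm (u, v))
      = bernoulliWeight p u * bernoulliWeight p v := by
    intro u v
    rw [bernoulliWeight, ← Fintype.prod_subtype_mul_prod_subtype P]
    congr 1 <;> refine prod_congr rfl fun b _ => ?_
    · simp [e, b.2]
    · simp [e, b.2]
  have hrestrict : ∀ u v, (fun b : {b // P b} => e.symm (u, v) b) = u :=
    fun u v => funext fun b => dif_pos b.2
  unfold bernoulliExpect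
  rw [← e.symm.sum_comp, Fintype.sum_prod_type]
  refine sum_congr rfl fun u _ => ?_
  simp only [hweight, hrestrict, mul_right_comm _ _ (F u), ← mul_sum, sum_bernoulliWeight, mul_one]

lemma bernoulliExpect_comp_injective (p : ℝ) {g : A → B} (hg : Injective g)
    (F : (A → Bool) → ℝ) :
    bernoulliExpect p (fun y : B → Bool => F (y ∘ g)) = bernoulliExpect p F := by
  classical
  refine (bernoulliExpect_restrict p (· ∈ Set.range g) fun u =>
    F (u ∘ Equiv.ofInjective g hg)).trans ?_
  -- `convert` reconciles the two `Fintype` instances on `Set.range g`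
  convert bernoulliExpect_comp_equiv p (Equiv.ofInjective g hg) F

lemma probTrue_comp_equiv (p : ℝ) (e : A ≃ B) (L : (A → Bool) → Bool) :
    probTrue p (fun y : B → Bool => L (y ∘ e)) = probTrue p L :=
  bernoulliExpect_comp_equiv p e fun x => if L x then 1 else 0

lemma probTrue_comp_injective (p : ℝ) {g : A → B} (hg : Injective g) (L : (A → Bool) → Bool) :
    probTrue p (fun y : B → Bool => L (y ∘ g)) = probTrue p L :=
  bernoulliExpect_comp_injective p hg fun x => if L x then 1 else 0

end Bernoulli

section ZeroSet

variable {S S' : Type*} [DecidableEq S] [DecidableEq S']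

def IsZeroSet (L : (S → Bool) → Bool) (Z : Finset S) : Prop :=
  L (fun i => if i ∈ Z then false else true) = false

variable {L : (S → Bool) → Bool}

lemma IsZeroSet.apply_eq_false (hL : Monotone L) {Z : Finset S} (hZ : IsZeroSet L Z)
    {x : S → Bool} (hx : ∀ i ∈ Z, x i = false) : L x = false := by
  refine le_antisymm (hZ ▸ hL fun i => ?_) (Bool.false_le _)
  split_ifs with hi
  · simp [hx i hi]
  · exact Bool.le_true _

lemma exists_minimal_isZeroSet [Fintype S] {x : S → Bool} (hx : L x = false) :
    ∃ Z, Minimal (IsZeroSet L) Z ∧ ∀ i ∈ Z, x i = false := by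
  have hzero : IsZeroSet L {i | x i = false} := by
    unfold IsZeroSet
    convert hx
    simp
  obtain ⟨Z, hZle, hZ⟩ := exists_minimal_le_of_wellFoundedLT _ _ hzero
  exact ⟨Z, hZ, fun i hi => by simpa using hZle hi⟩

lemma exists_minimal_isZeroSet_image_eq [Fintype S] (hL : Monotone L) (φ : S → S')
    {Z : Finset S'} (hZ : Minimal (IsZeroSet fun z : S' → Bool => L (z ∘ φ)) Z) :
    ∃ W, Minimal (IsZeroSet L) W ∧ W.image φ = Z := by
  obtain ⟨W, hW, hWZ⟩ := exists_minimal_isZeroSet hZ.prop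
  have hsub : W.image φ ⊆ Z := by
    simp only [subset_iff, mem_image, forall_exists_index, and_imp, forall_apply_eq_imp_iff₂]
    intro i hi
    simpa using hWZ i hi
  have himage : IsZeroSet (fun z : S' → Bool => L (z ∘ φ)) (W.image φ) :=
    hW.prop.apply_eq_false hL fun i hi => by simpa using ⟨i, hi, rfl⟩
  exact ⟨W, hW, hZ.eq_of_le himage hsub⟩

end ZeroSet

section Merge

lemma indicator_add_indicator_le {g : Bool → Bool → Bool} (h10 : g true false ≤ g true true)
    (h01 : g false true ≤ g true true) (h00 : g true false → g false true → g false false)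
    (a b : Bool) :
    ((if g a b then 1 else 0 : ℝ) + if g b a then 1 else 0)
      ≤ (if g a a then 1 else 0) + if g b b then 1 else 0 := by
  revert h10 h01 h00
  cases a <;> cases b <;> cases g true true <;> cases g true false <;> cases g false true <;>
    cases g false false <;> norm_num

variable {S : Type*} [Fintype S] [DecidableEq S] {L : (S → Bool) → Bool} {s₁ s₂ : S}

lemma apply_update_update_false_false (hL : Monotone L)
    (hno : ∀ Z, Minimal (IsZeroSet L) Z → s₁ ∈ Z → s₂ ∉ Z) (x : S → Bool)
    (h10 : L (update (update x s₁ true) s₂ false))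
    (h01 : L (update (update x s₁ false) s₂ true)) :
    L (update (update x s₁ false) s₂ false) := by
  by_contra h00
  obtain ⟨Z, hZ, hZx⟩ := exists_minimal_isZeroSet (Bool.not_eq_true _ ▸ h00)
  have hs₁ : s₁ ∈ Z := by
    by_contra hs₁
    refine Bool.false_ne_true (hZ.prop.apply_eq_false hL (fun i hi => ?_) ▸ h10)
    have hi₁ : i ≠ s₁ := ne_of_mem_of_not_mem hi hs₁
    simpa [update_apply, hi₁] using hZx i hi
  have hs₂ : s₂ ∈ Z := by
    by_contra hs₂
    refine Bool.false_ne_true (hZ.prop.apply_eq_false hL (fun i hi => ?_) ▸ h01)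
    have hi₂ : i ≠ s₂ := ne_of_mem_of_not_mem hi hs₂
    simpa [update_apply, hi₂] using hZx i hi
  exact hno Z hZ hs₁ hs₂

lemma indicator_add_indicator_swap_le (hL : Monotone L) (hs : s₁ ≠ s₂)
    (hno : ∀ Z, Minimal (IsZeroSet L) Z → s₁ ∈ Z → s₂ ∉ Z) (x : S → Bool) :
    ((if L x then 1 else 0 : ℝ) + if L (x ∘ Equiv.swap s₂ s₁) then 1 else 0)
      ≤ (if L (update x s₂ (x s₁)) then 1 else 0) + if L (update x s₁ (x s₂)) then 1 else 0 := by
  have key := indicator_add_indicator_le (g := fun a b => L (update (update x s₁ a) s₂ b))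
    (hL (update_le_update_iff'.mpr (Bool.false_le _)))
    (hL (update_le_update_iff.mpr
      ⟨le_rfl, fun j _ => update_le_update_iff'.mpr (Bool.false_le _) j⟩))
    (apply_update_update_false_false hL hno x) (x s₁) (x s₂)
  convert key using 4
  · simp
  · rw [Equiv.comp_swap_eq_update]
  · simp
  · rw [update_eq_self_iff.mpr (update_of_ne hs.symm _ _).symm]

theorem probTrue_le_probTrue_update {p : ℝ} (hp0 : 0 ≤ p) (hp1 : p ≤ 1) (hL : Monotone L)
    (hs : s₁ ≠ s₂) (hno : ∀ Z, Minimal (IsZeroSet L) Z → s₁ ∈ Z → s₂ ∉ Z) :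
    probTrue p L ≤ probTrue p fun x => L (update x s₂ (x s₁)) := by
  have hswap := probTrue_comp_equiv p (Equiv.swap s₂ s₁) L
  have hmerge : probTrue p (fun x => L (update x s₁ (x s₂)))
      = probTrue p fun x => L (update x s₂ (x s₁)) := by
    refine .trans (congrArg (probTrue p) (funext fun x => ?_))
      (probTrue_comp_equiv p (Equiv.swap s₂ s₁) fun x => L (update x s₂ (x s₁)))
    rw [Equiv.comp_swap_eq_update]
    simp [hs, update_eq_self_iff.mpr (update_of_ne hs.symm _ _).symm]
  have hsum := bernoulliExpect_mono hp0 hp1 (fun x => indicator_add_indicator_swap_le hL hs hno x)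
  rw [bernoulliExpect_add, bernoulliExpect_add] at hsum
  unfold probTrue at hswap hmerge ⊢
  linarith

end Merge

section FreshPoint

variable {S T : Type*} [Fintype S] [DecidableEq S] {ψ : S → T} {s₁ s₂ : S}

lemma card_image_lt_card_image_update_none [DecidableEq T] (hψs : ψ s₁ = ψ s₂) (hs : s₁ ≠ s₂) :
    (univ.image ψ).card < (univ.image (update (some ∘ ψ) s₂ none)).card := by
  have hsub : univ.image (some ∘ ψ) ⊆ univ.image (update (some ∘ ψ) s₂ none) := by
    simp only [subset_iff, mem_image, mem_univ, true_and, forall_exists_index,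
      forall_apply_eq_imp_iff]
    intro s
    by_cases h : s = s₂
    · exact ⟨s₁, by simp [hs, h, hψs]⟩
    · exact ⟨s, by simp [h]⟩
  calc (univ.image ψ).card = (univ.image (some ∘ ψ)).card := by
        rw [← image_image, card_image_of_injective _ (Option.some_injective T)]
    _ < _ := card_lt_card ((ssubset_iff_of_subset hsub).mpr
        ⟨none, mem_image.mpr ⟨s₂, mem_univ _, by simp⟩, by simp⟩)

lemma injOn_update_none_of_minimal_isZeroSet {L : (S → Bool) → Bool} (hL : Monotone L)
    (hψ : ∀ Z, Minimal (IsZeroSet L) Z → Set.InjOn ψ Z) (hψs : ψ s₁ = ψ s₂) (hs : s₁ ≠ s₂)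
    {Z : Finset S} (hZ : Minimal (IsZeroSet fun x => L (x ∘ update id s₂ s₁)) Z) :
    Set.InjOn (update (some ∘ ψ) s₂ none) Z := by
  obtain ⟨W, hW, rfl⟩ := exists_minimal_isZeroSet_image_eq hL _ hZ
  have hψθ : ψ ∘ update id s₂ s₁ = ψ := by simp [comp_update, hψs]
  have hinjOn : Set.InjOn ψ (update id s₂ s₁ '' W) :=
    Set.InjOn.image_of_comp (by rw [hψθ]; exact hψ W hW)
  rw [coe_image]
  refine ((Option.some_injective T).comp_injOn hinjOn).congr ?_
  rintro _ ⟨w, -, rfl⟩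
  refine (update_of_ne ?_ _ _).symm
  by_cases h : w = s₂ <;> simp [h, hs]

end FreshPoint

theorem probTrue_le_probTrue_comp_of_injOn {S T : Type*} [Fintype S] [DecidableEq S]
    [Fintype T] [DecidableEq T] {p : ℝ} (hp0 : 0 ≤ p) (hp1 : p ≤ 1) (L : (S → Bool) → Bool)
    (hL : Monotone L) (ψ : S → T)
    (hψ : ∀ Z, Minimal (IsZeroSet L) Z → Set.InjOn ψ Z) :
    probTrue p L ≤ probTrue p fun y : T → Bool => L (y ∘ ψ) := by
  by_cases hinj : Injective ψ
  · exact (probTrue_comp_injective p hinj L).ge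
  obtain ⟨s₁, s₂, hψs, hs⟩ : ∃ s₁ s₂, ψ s₁ = ψ s₂ ∧ s₁ ≠ s₂ := by simpa [Injective] using hinj
  set θ : S → S := update id s₂ s₁
  set ψ' : S → Option T := update (some ∘ ψ) s₂ none
  have hcard : (univ.image ψ).card < (univ.image ψ').card :=
    card_image_lt_card_image_update_none hψs hs
  have hmarg : (probTrue p fun y : Option T → Bool => L ((y ∘ ψ') ∘ θ))
      = probTrue p fun y : T → Bool => L (y ∘ ψ) := by
    refine .trans (congrArg (probTrue p) (funext fun y => ?_))
      (probTrue_comp_injective p (Option.some_injective T) fun y : T → Bool => L (y ∘ ψ))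
    congr 1
    ext s
    by_cases h : s = s₂ <;> simp [θ, ψ', h, hs, hψs]
  calc probTrue p L ≤ probTrue p fun x => L (x ∘ θ) := by
        simpa only [θ, comp_update, comp_id] using
          probTrue_le_probTrue_update hp0 hp1 hL hs fun Z hZ h₁ h₂ => hs (hψ Z hZ h₁ h₂ hψs)
    _ ≤ probTrue p fun y : Option T → Bool => L ((y ∘ ψ') ∘ θ) :=
        probTrue_le_probTrue_comp_of_injOn hp0 hp1 _ (fun x y hxy => hL fun s => hxy (θ s)) ψ'
          fun Z hZ => injOn_update_none_of_minimal_isZeroSet hL hψ hψs hs hZ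
    _ = probTrue p fun y : T → Bool => L (y ∘ ψ) := hmarg
termination_by Fintype.card S - (univ.image ψ).card
decreasing_by
  have := (card_image_le (s := univ) (f := ψ')).trans_eq card_univ
  change Fintype.card S - (univ.image ψ').card < Fintype.card S - (univ.image ψ).card
  omega

/-- if ψ is injective on every minimal zero-set of the monotone Boolean
function L, then P[L(Y∘ψ)=1] ≥ P[L(X)=1] for i.i.d. Bernoulli(p) collections X, Y. -/
theorem stmt_3 {S T : Type*} [Fintype S] [DecidableEq S] [Fintype T] [DecidableEq T]
    (L : (S → Bool) → Bool) (hL : Monotone L) (ψ : S → T)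
    (hψ : ∀ Z : Finset S,
      L (fun i => if i ∈ Z then false else true) = false →
      (∀ Y : Finset S, Y ⊂ Z → L (fun i => if i ∈ Y then false else true) ≠ false) →
      (Z.image ψ).card = Z.card)
    (p : ℝ) (hp0 : 0 ≤ p) (hp1 : p ≤ 1) :
    (∑ y : T → Bool, (∏ j, if y j then p else 1 - p) *
        (if L (fun i => y (ψ i)) then 1 else 0))
      ≥ ∑ x : S → Bool, (∏ i, if x i then p else 1 - p) * (if L x then 1 else 0) :=
  probTrue_le_probTrue_comp_of_injOn hp0 hp1 L hL ψ fun Z hZ =>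
    card_image_iff.mp (hψ Z hZ.prop fun _ hY => (minimal_iff_forall_lt.mp hZ).2 hY)
end

section
/- Pearl's game AB_n(p): assign to each of the 2^{2n} outcomes of the length-2n alternating binary game independently the winner Bob with probability p. Let P^{AB}_n(p) be the probability Bob has a winning strategy. With p_c = (3−√5)/2, one has P^{AB}_n(p) → 0 if p < p_c, P^{AB}_n(p) → 1 if p > p_c, and P^{AB}_n(p_c) = p_c for all n ≥ 1. -/
open Filter

/-- Minimax value of the complete binary tree of depth `m` with leaves labelled by
`x`; `isMin = true` means the player to move minimizes (Alice), alternating at each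
level. -/
def treeVal : (m : ℕ) → Bool → ((Fin m → Bool) → Bool) → Bool
  | 0, _, x => x (fun i => i.elim0)
  | m + 1, isMin, x =>
      if isMin then
        treeVal m (!isMin) (fun f => x (Fin.cons false f)) &&
          treeVal m (!isMin) (fun f => x (Fin.cons true f))
      else
        treeVal m (!isMin) (fun f => x (Fin.cons false f)) ||
          treeVal m (!isMin) (fun f => x (Fin.cons true f))

/-- `PAB n p`: the probability that Bob has a winning strategy in Pearl's game
`AB_n(p)`: Alice and Bob alternately play n binary moves each (Alice starts and
minimizes), and the 2^(2n) outcomes are independently wins for Bob with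
probability p. -/
noncomputable def PAB (n : ℕ) (p : ℝ) : ℝ :=
  ∑ x : (Fin (2 * n) → Bool) → Bool,
    (∏ ω : Fin (2 * n) → Bool, if x ω then p else 1 - p) *
      (if treeVal (2 * n) true x then 1 else 0)

namespace Pearl

noncomputable def pW (m : ℕ) (p : ℝ) (y : (Fin m → Bool) → Bool) : ℝ :=
  ∏ ω, if y ω then p else 1 - p

noncomputable def pS (m : ℕ) (b : Bool) (p : ℝ) : ℝ :=
  ∑ y : (Fin m → Bool) → Bool, pW m p y * (if treeVal m b y then 1 else 0)

def splitEquiv (m : ℕ) :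
    ((Fin (m + 1) → Bool) → Bool) ≃ (((Fin m → Bool) → Bool) × ((Fin m → Bool) → Bool)) where
  toFun x := (fun f => x (Fin.cons false f), fun f => x (Fin.cons true f))
  invFun yz g := if g 0 then yz.2 (Fin.tail g) else yz.1 (Fin.tail g)
  left_inv x := by
    funext g
    cases h : g 0 <;>
      · conv_rhs => rw [← Fin.cons_self_tail g, h]
        simp [h]
  right_inv yz := by
    ext f <;> simp [Fin.cons_zero, Fin.tail_cons]

@[simp] lemma splitEquiv_symm_false (m : ℕ) (yz) (f : Fin m → Bool) :
    (splitEquiv m).symm yz (Fin.cons false f) = yz.1 f := by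
  simp [splitEquiv, Fin.cons_zero, Fin.tail_cons]

@[simp] lemma splitEquiv_symm_true (m : ℕ) (yz) (f : Fin m → Bool) :
    (splitEquiv m).symm yz (Fin.cons true f) = yz.2 f := by
  simp [splitEquiv, Fin.cons_zero, Fin.tail_cons]

lemma pW_succ (m : ℕ) (p : ℝ) (x : (Fin (m + 1) → Bool) → Bool) :
    pW (m + 1) p x =
      pW m p (fun f => x (Fin.cons false f)) * pW m p (fun f => x (Fin.cons true f)) := by
  unfold pW
  rw [← Equiv.prod_comp (Fin.consEquiv (fun _ => Bool)) (fun g => if x g then p else 1 - p)]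
  rw [Fintype.prod_prod_type]
  rw [Fintype.prod_bool]
  exact mul_comm _ _

lemma sum_split (m : ℕ) (p : ℝ) (A B : ((Fin m → Bool) → Bool) → ℝ) :
    (∑ x : (Fin (m + 1) → Bool) → Bool,
        pW (m + 1) p x * (A (fun f => x (Fin.cons false f)) * B (fun f => x (Fin.cons true f))))
      = (∑ y, pW m p y * A y) * (∑ y, pW m p y * B y) := by
  rw [← Equiv.sum_comp (splitEquiv m).symm]
  rw [Fintype.sum_prod_type]
  rw [Finset.sum_mul_sum]
  refine Finset.sum_congr rfl fun y _ => Finset.sum_congr rfl fun z _ => ?_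
  rw [pW_succ]
  simp only [splitEquiv_symm_false, splitEquiv_symm_true]
  ring

lemma mass (m : ℕ) (p : ℝ) : (∑ y : (Fin m → Bool) → Bool, pW m p y) = 1 := by
  induction m with
  | zero =>
    rw [Fintype.sum_equiv (Equiv.funUnique ((Fin 0 → Bool)) Bool) _
      (fun b => if b then p else 1 - p) (fun y => by
        simp [pW, Fintype.prod_unique, Equiv.funUnique])]
    simp
  | succ m ih =>
    have := sum_split m p (fun _ => 1) (fun _ => 1)
    simpa [ih] using this

end Pearl

namespace Pearl

lemma pS_zero (b : Bool) (p : ℝ) : pS 0 b p = p := by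
  unfold pS
  rw [Fintype.sum_equiv (Equiv.funUnique ((Fin 0 → Bool)) Bool) _
    (fun c => (if c then p else 1 - p) * (if c then 1 else 0)) (fun y => by
      have hy : ∀ u : Fin 0 → Bool, y u = y default := fun u =>
        congrArg y (Subsingleton.elim _ _)
      simp [pW, treeVal, Fintype.prod_unique, Equiv.funUnique, hy])]
  simp

lemma pS_succ_true (m : ℕ) (p : ℝ) :
    pS (m + 1) true p = pS m false p * pS m false p := by
  have h := sum_split m p (fun y => if treeVal m false y then (1:ℝ) else 0)
    (fun y => if treeVal m false y then (1:ℝ) else 0)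
  unfold pS
  rw [← h]
  refine Finset.sum_congr rfl fun y _ => ?_
  congr 1
  cases h1 : treeVal m false (fun f => y (Fin.cons false f)) <;>
    cases h2 : treeVal m false (fun f => y (Fin.cons true f)) <;>
    simp [treeVal, h1, h2]

lemma pS_succ_false (m : ℕ) (p : ℝ) :
    pS (m + 1) false p = 1 - (1 - pS m true p) * (1 - pS m true p) := by
  have h := sum_split m p (fun y => 1 - (if treeVal m true y then (1:ℝ) else 0))
    (fun y => 1 - (if treeVal m true y then (1:ℝ) else 0))
  have e2 : (∑ y : (Fin m → Bool) → Bool,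
      pW m p y * (1 - (if treeVal m true y then (1:ℝ) else 0))) = 1 - pS m true p := by
    simp only [mul_sub, mul_one, Finset.sum_sub_distrib, mass, pS]
  rw [e2] at h
  have e1 : ∀ y : (Fin (m + 1) → Bool) → Bool,
      pW (m + 1) p y * (if treeVal (m + 1) false y then (1:ℝ) else 0)
      = pW (m + 1) p y - pW (m + 1) p y *
          ((1 - (if treeVal m true (fun f => y (Fin.cons false f)) then (1:ℝ) else 0)) *
           (1 - (if treeVal m true (fun f => y (Fin.cons true f)) then (1:ℝ) else 0))) := by
    intro y
    cases h1 : treeVal m true (fun f => y (Fin.cons false f)) <;>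
      cases h2 : treeVal m true (fun f => y (Fin.cons true f)) <;>
      simp [treeVal, h1, h2]
  unfold pS
  rw [Finset.sum_congr rfl (fun y _ => e1 y), Finset.sum_sub_distrib, mass, h]
  simp [pS]

/-- the one-round (two half-moves squared… i.e. full Alice+Bob round) map -/
noncomputable def hmap (q : ℝ) : ℝ := (1 - (1 - q) ^ 2) ^ 2

lemma PAB_zero (p : ℝ) : PAB 0 p = p := pS_zero true p

lemma PAB_succ (n : ℕ) (p : ℝ) : PAB (n + 1) p = hmap (PAB n p) := by
  have h1 : PAB (n + 1) p = pS (2 * (n + 1)) true p := rfl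
  have h2 : 2 * (n + 1) = (2 * n + 1) + 1 := by ring
  rw [h1, h2, pS_succ_true, pS_succ_false]
  show _ = hmap (pS (2 * n) true p)
  unfold hmap
  ring

end Pearl

namespace Pearl

lemma hs : (Real.sqrt 5) ^ 2 = 5 := Real.sq_sqrt (by norm_num)

lemma hs2 : 2 ≤ Real.sqrt 5 := by
  nlinarith [hs, Real.sqrt_nonneg 5]

lemma hs3 : Real.sqrt 5 ≤ 3 := by
  nlinarith [hs, Real.sqrt_nonneg 5]

lemma id1 (q : ℝ) :
    q - hmap q = q * (1 - q) * ((3 - Real.sqrt 5) / 2 - q) * ((3 + Real.sqrt 5) / 2 - q) := by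
  unfold hmap
  linear_combination (q * (1 - q) / 4) * hs

lemma hmap_fixed : hmap ((3 - Real.sqrt 5) / 2) = (3 - Real.sqrt 5) / 2 := by
  unfold hmap
  linear_combination (((Real.sqrt 5) ^ 2 - 4 * Real.sqrt 5 + 3) / 16) * hs

lemma hmap_nonneg (q : ℝ) : 0 ≤ hmap q := sq_nonneg _

lemma hmap_le_one {q : ℝ} (h0 : 0 ≤ q) (h1 : q ≤ 1) : hmap q ≤ 1 := by
  unfold hmap
  nlinarith [sq_nonneg (1 - q), sq_nonneg q, mul_nonneg h0 (sub_nonneg.2 h1)]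

lemma hmap_le {q : ℝ} (h0 : 0 ≤ q) (h1 : q < (3 - Real.sqrt 5) / 2) : hmap q ≤ q := by
  have h2 := id1 q
  nlinarith [hs2, hs3, mul_nonneg (mul_nonneg (mul_nonneg h0
    (by nlinarith [hs2, hs3] : (0:ℝ) ≤ 1 - q)) (le_of_lt (sub_pos.2 h1)))
    (by nlinarith [hs2, hs3] : (0:ℝ) ≤ (3 + Real.sqrt 5) / 2 - q)]

lemma hmap_ge {q : ℝ} (h1 : (3 - Real.sqrt 5) / 2 < q) (h2 : q ≤ 1) : q ≤ hmap q := by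
  have h3 := id1 q
  have hq0 : 0 < q := lt_of_le_of_lt (by nlinarith [hs3]) h1
  nlinarith [mul_nonneg (mul_nonneg (le_of_lt hq0) (sub_nonneg.2 h2))
      (le_of_lt (sub_pos.2 h1)),
    (by nlinarith [hs2] : (0:ℝ) < (3 + Real.sqrt 5) / 2 - q)]

lemma hmap_continuous : Continuous hmap := by
  unfold hmap; continuity

end Pearl


open Pearl

/-- Pearl's result: with `p_c = (3 - √5)/2`, `P^AB_n(p) → 0` for
`p < p_c`, `P^AB_n(p) → 1` for `p > p_c`, and `P^AB_n(p_c) = p_c` for all `n ≥ 1`. -/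
theorem stmt_11 (p : ℝ) (hp0 : 0 ≤ p) (hp1 : p ≤ 1) :
    (p < (3 - Real.sqrt 5) / 2 →
      Tendsto (fun n => PAB n p) atTop (nhds 0)) ∧
    (p > (3 - Real.sqrt 5) / 2 →
      Tendsto (fun n => PAB n p) atTop (nhds 1)) ∧
    (∀ n : ℕ, 1 ≤ n → PAB n ((3 - Real.sqrt 5) / 2) = (3 - Real.sqrt 5) / 2) := by
  set s := Real.sqrt 5 with hsdef
  refine ⟨?_, ?_, ?_⟩
  · -- p < p_c : tendsto 0
    intro hp
    have bounds : ∀ n, 0 ≤ PAB n p ∧ PAB n p ≤ p := by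
      intro n
      induction n with
      | zero => exact ⟨by rw [PAB_zero]; exact hp0, (PAB_zero p).le⟩
      | succ n ih =>
        rw [PAB_succ]
        exact ⟨hmap_nonneg _, le_trans (hmap_le ih.1 (lt_of_le_of_lt ih.2 hp)) ih.2⟩
    have anti : Antitone (fun n => PAB n p) := antitone_nat_of_succ_le fun n => by
      rw [PAB_succ]
      exact hmap_le (bounds n).1 (lt_of_le_of_lt (bounds n).2 hp)
    have bdd : BddBelow (Set.range fun n => PAB n p) :=
      ⟨0, fun x ⟨n, hn⟩ => hn ▸ (bounds n).1⟩
    have hconv := tendsto_atTop_ciInf anti bdd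
    set L := ⨅ n, PAB n p with hLdef
    have hL0 : 0 ≤ L := le_ciInf fun n => (bounds n).1
    have hLp : L ≤ p := le_trans (ciInf_le bdd 0) (bounds 0).2
    have h1 : Tendsto (fun n => hmap (PAB n p)) atTop (nhds (hmap L)) :=
      (hmap_continuous.tendsto L).comp hconv
    have h2 : Tendsto (fun n => PAB (n + 1) p) atTop (nhds L) :=
      hconv.comp (tendsto_add_atTop_nat 1)
    have heq : (fun n => hmap (PAB n p)) = fun n => PAB (n + 1) p :=
      funext fun n => (PAB_succ n p).symm
    rw [heq] at h1
    have hfix : hmap L = L := tendsto_nhds_unique h1 h2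
    have hLlt : L < (3 - s) / 2 := lt_of_le_of_lt hLp hp
    have hid := id1 L
    rw [hfix, sub_self] at hid
    have hL : L = 0 := by
      by_contra hne
      have hpos : 0 < L := lt_of_le_of_ne hL0 (Ne.symm hne)
      have f1 : 0 < 1 - L := by nlinarith [hs2]
      have f2 : 0 < (3 - s) / 2 - L := sub_pos.2 hLlt
      have f3 : 0 < (3 + s) / 2 - L := by nlinarith [hs2, hs3]
      nlinarith [mul_pos (mul_pos (mul_pos hpos f1) f2) f3]
    exact hL ▸ hconv
  · -- p > p_c : tendsto 1
    intro hp
    have bounds : ∀ n, p ≤ PAB n p ∧ PAB n p ≤ 1 := by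
      intro n
      induction n with
      | zero => exact ⟨(PAB_zero p).ge, by rw [PAB_zero]; exact hp1⟩
      | succ n ih =>
        rw [PAB_succ]
        exact ⟨le_trans ih.1 (hmap_ge (lt_of_lt_of_le hp ih.1) ih.2),
          hmap_le_one (le_trans hp0 ih.1) ih.2⟩
    have mono : Monotone (fun n => PAB n p) := monotone_nat_of_le_succ fun n => by
      rw [PAB_succ]
      exact hmap_ge (lt_of_lt_of_le hp (bounds n).1) (bounds n).2
    have bdd : BddAbove (Set.range fun n => PAB n p) :=
      ⟨1, fun x ⟨n, hn⟩ => hn ▸ (bounds n).2⟩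
    have hconv := tendsto_atTop_ciSup mono bdd
    set L := ⨆ n, PAB n p with hLdef
    have hL1 : L ≤ 1 := ciSup_le fun n => (bounds n).2
    have hLp : p ≤ L := le_trans (bounds 0).1 (le_ciSup bdd 0)
    have h1 : Tendsto (fun n => hmap (PAB n p)) atTop (nhds (hmap L)) :=
      (hmap_continuous.tendsto L).comp hconv
    have h2 : Tendsto (fun n => PAB (n + 1) p) atTop (nhds L) :=
      hconv.comp (tendsto_add_atTop_nat 1)
    have heq : (fun n => hmap (PAB n p)) = fun n => PAB (n + 1) p :=
      funext fun n => (PAB_succ n p).symm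
    rw [heq] at h1
    have hfix : hmap L = L := tendsto_nhds_unique h1 h2
    have hLgt : (3 - s) / 2 < L := lt_of_lt_of_le hp hLp
    have hid := id1 L
    rw [hfix, sub_self] at hid
    have hL : L = 1 := by
      by_contra hne
      have hlt : L < 1 := lt_of_le_of_ne hL1 hne
      have hpos : 0 < L := by nlinarith [hs3]
      have f1 : 0 < 1 - L := sub_pos.2 hlt
      have f2 : (3 - s) / 2 - L < 0 := sub_neg.2 hLgt
      have f3 : 0 < (3 + s) / 2 - L := by nlinarith [hs2]
      nlinarith [mul_pos (mul_pos hpos f1) f3, f2]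
    exact hL ▸ hconv
  · -- fixed point
    have key : ∀ m : ℕ, PAB m ((3 - s) / 2) = (3 - s) / 2 := by
      intro m
      induction m with
      | zero => exact PAB_zero _
      | succ m ih =>
        rw [PAB_succ, ih]
        exact hmap_fixed
    exact fun n _ => key n
end

section
/- Let h : [0,1] → [0,1] be defined by h(q) = (2q − q^2)^2, and let p_c = (3 − √5)/2. Then h is monotone increasing on [0,1], p_c is a fixed point of h, and for all q ∈ [0,1]: if q < p_c then h^{∘n}(q) → 0 as n → ∞, and if q > p_c then h^{∘n}(q) → 1 as n → ∞. -/
open Filter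

noncomputable def hmap : ℝ → ℝ := fun q => (2 * q - q ^ 2) ^ 2

lemma hmap_cont : Continuous hmap := by unfold hmap; continuity

lemma s5_sq : Real.sqrt 5 ^ 2 = 5 := Real.sq_sqrt (by norm_num)
lemma s5_lb : 2 < Real.sqrt 5 := by nlinarith [s5_sq, Real.sqrt_nonneg 5]
lemma s5_ub : Real.sqrt 5 < 3 := by nlinarith [s5_sq, Real.sqrt_nonneg 5]

lemma hmap_fix : hmap ((3 - Real.sqrt 5) / 2) = (3 - Real.sqrt 5) / 2 := by
  unfold hmap
  linear_combination ((Real.sqrt 5 ^ 2 - 4 * Real.sqrt 5 + 3) / 16) * s5_sq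

lemma hmap_nonneg (x : ℝ) : 0 ≤ hmap x := sq_nonneg _

-- below p_c the map decreases
lemma hmap_le_self {x : ℝ} (hx0 : 0 ≤ x) (hxp : x ≤ (3 - Real.sqrt 5) / 2) :
    hmap x ≤ x := by
  have ha : 0 ≤ (3 - Real.sqrt 5) / 2 - x := by linarith
  have hb : 0 ≤ (3 + Real.sqrt 5) / 2 - x := by linarith [s5_lb]
  have h1 : 0 ≤ x ^ 2 - 3 * x + 1 := by nlinarith [mul_nonneg ha hb, s5_sq]
  have h2 : 0 ≤ 1 - x := by linarith [s5_lb]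
  unfold hmap
  nlinarith [mul_nonneg (mul_nonneg hx0 h2) h1]

-- above p_c the map increases (within [p_c, 1])
lemma self_le_hmap {x : ℝ} (hxp : (3 - Real.sqrt 5) / 2 ≤ x) (hx1 : x ≤ 1) :
    x ≤ hmap x := by
  have ha : 0 ≤ x - (3 - Real.sqrt 5) / 2 := by linarith
  have hb : 0 ≤ (3 + Real.sqrt 5) / 2 - x := by linarith [s5_lb]
  have h1 : 0 ≤ -(x ^ 2 - 3 * x + 1) := by nlinarith [mul_nonneg ha hb, s5_sq]
  have hx0 : 0 ≤ x := by linarith [s5_ub]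
  unfold hmap
  nlinarith [mul_nonneg (mul_nonneg hx0 (by linarith : (0:ℝ) ≤ 1 - x)) h1]

lemma hmap_le_one {x : ℝ} (hx0 : 0 ≤ x) (hx1 : x ≤ 1) : hmap x ≤ 1 := by
  have h0 : 0 ≤ 2 * x - x ^ 2 := by nlinarith
  have h1 : 2 * x - x ^ 2 ≤ 1 := by nlinarith [sq_nonneg (1 - x)]
  unfold hmap
  calc (2 * x - x ^ 2) ^ 2 ≤ 1 ^ 2 := pow_le_pow_left₀ h0 h1 2
    _ = 1 := by norm_num

lemma hmap_mono : MonotoneOn hmap (Set.Icc 0 1) := by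
  rintro a ⟨ha0, ha1⟩ b ⟨hb0, hb1⟩ hab
  have hv0 : 0 ≤ 2 * a - a ^ 2 := by nlinarith
  have hle : 2 * a - a ^ 2 ≤ 2 * b - b ^ 2 := by nlinarith
  exact pow_le_pow_left₀ hv0 hle 2

-- a fixed point in [0, p_c) must be 0
lemma fix_low {L : ℝ} (_h0 : 0 ≤ L) (hp : L < (3 - Real.sqrt 5) / 2)
    (hfix : hmap L = L) : L = 0 := by
  have ha : 0 < (3 - Real.sqrt 5) / 2 - L := by linarith
  have hb : 0 < (3 + Real.sqrt 5) / 2 - L := by linarith [s5_lb]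
  have h1 : 0 < L ^ 2 - 3 * L + 1 := by nlinarith [mul_pos ha hb, s5_sq]
  have h2 : 0 < 1 - L := by linarith [s5_lb]
  have hz : L * ((1 - L) * (L ^ 2 - 3 * L + 1)) = 0 := by
    have := hfix; unfold hmap at this; nlinarith [this]
  rcases mul_eq_zero.mp hz with h | h
  · exact h
  · exfalso; nlinarith [mul_pos h2 h1]

-- a fixed point in (p_c, 1] must be 1
lemma fix_high {L : ℝ} (hp : (3 - Real.sqrt 5) / 2 < L) (h1 : L ≤ 1)
    (hfix : hmap L = L) : L = 1 := by
  have ha : 0 < L - (3 - Real.sqrt 5) / 2 := by linarith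
  have hb : 0 < (3 + Real.sqrt 5) / 2 - L := by linarith [s5_lb]
  have hq : 0 < -(L ^ 2 - 3 * L + 1) := by nlinarith [mul_pos ha hb, s5_sq]
  have hL0 : 0 < L := by linarith [s5_ub]
  have hz : L * ((1 - L) * (L ^ 2 - 3 * L + 1)) = 0 := by
    have := hfix; unfold hmap at this; nlinarith [this]
  rcases mul_eq_zero.mp hz with h | h
  · exfalso; linarith
  · rcases mul_eq_zero.mp h with h' | h'
    · linarith
    · exfalso; linarith

/-- the map `h(q) = (2q - q²)²` is monotone on [0,1], has
`p_c = (3-√5)/2` as a fixed point, and its iterates converge to 0 below `p_c` and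
to 1 above `p_c` (within [0,1]). -/
theorem stmt_12 :
    MonotoneOn (fun q : ℝ => (2 * q - q ^ 2) ^ 2) (Set.Icc 0 1) ∧
    (fun q : ℝ => (2 * q - q ^ 2) ^ 2) ((3 - Real.sqrt 5) / 2) =
      (3 - Real.sqrt 5) / 2 ∧
    (∀ q ∈ Set.Icc (0 : ℝ) 1,
      (q < (3 - Real.sqrt 5) / 2 →
        Tendsto (fun n => (fun q : ℝ => (2 * q - q ^ 2) ^ 2)^[n] q) atTop (nhds 0)) ∧
      (q > (3 - Real.sqrt 5) / 2 →
        Tendsto (fun n => (fun q : ℝ => (2 * q - q ^ 2) ^ 2)^[n] q) atTop (nhds 1))) := by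
  refine ⟨hmap_mono, hmap_fix, ?_⟩
  rintro q ⟨hq0, hq1⟩
  constructor
  · -- q < p_c : iterates → 0
    intro hqp
    set u : ℕ → ℝ := fun n => hmap^[n] q with hu
    show Tendsto u atTop (nhds 0)
    have hmem : ∀ n, 0 ≤ u n ∧ u n ≤ q := by
      intro n
      induction n with
      | zero => exact ⟨hq0, le_refl q⟩
      | succ n ih =>
        have h1 : u (n + 1) = hmap (u n) := Function.iterate_succ_apply' hmap n q
        constructor
        · rw [h1]; exact hmap_nonneg _
        · rw [h1]
          exact le_trans (hmap_le_self ih.1 (by linarith [ih.2])) ih.2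
    have hanti : Antitone u := antitone_nat_of_succ_le fun n => by
      have h1 : u (n + 1) = hmap (u n) := Function.iterate_succ_apply' hmap n q
      rw [h1]; exact hmap_le_self (hmem n).1 (by linarith [(hmem n).2])
    have hbdd : BddBelow (Set.range u) := ⟨0, by rintro x ⟨n, rfl⟩; exact (hmem n).1⟩
    have hL : Tendsto u atTop (nhds (⨅ n, u n)) := tendsto_atTop_ciInf hanti hbdd
    set L := ⨅ n, u n with hLdef
    have hL0 : 0 ≤ L := le_ciInf fun n => (hmem n).1
    have hLq : L ≤ q := by
      have := ciInf_le hbdd 0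
      simpa [hu] using this
    have hfixL : hmap L = L := by
      have h1 : Tendsto (fun n => u (n + 1)) atTop (nhds L) :=
        hL.comp (tendsto_add_atTop_nat 1)
      have h2 : Tendsto (fun n => hmap (u n)) atTop (nhds (hmap L)) :=
        (hmap_cont.tendsto L).comp hL
      have h3 : (fun n => u (n + 1)) = fun n => hmap (u n) := by
        funext n; exact Function.iterate_succ_apply' hmap n q
      rw [h3] at h1
      exact tendsto_nhds_unique h2 h1
    have : L = 0 := fix_low hL0 (lt_of_le_of_lt hLq hqp) hfixL
    rwa [this] at hL
  · -- q > p_c : iterates → 1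
    intro hqp
    set u : ℕ → ℝ := fun n => hmap^[n] q with hu
    show Tendsto u atTop (nhds 1)
    have hmem : ∀ n, q ≤ u n ∧ u n ≤ 1 := by
      intro n
      induction n with
      | zero => exact ⟨le_refl q, hq1⟩
      | succ n ih =>
        have h1 : u (n + 1) = hmap (u n) := Function.iterate_succ_apply' hmap n q
        constructor
        · rw [h1]
          exact le_trans ih.1 (self_le_hmap (by linarith [ih.1]) ih.2)
        · rw [h1]; exact hmap_le_one (by linarith [ih.1, s5_ub]) ih.2
    have hmono : Monotone u := monotone_nat_of_le_succ fun n => by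
      have h1 : u (n + 1) = hmap (u n) := Function.iterate_succ_apply' hmap n q
      rw [h1]; exact self_le_hmap (by linarith [(hmem n).1]) (hmem n).2
    have hbdd : BddAbove (Set.range u) := ⟨1, by rintro x ⟨n, rfl⟩; exact (hmem n).2⟩
    have hL : Tendsto u atTop (nhds (⨆ n, u n)) := tendsto_atTop_ciSup hmono hbdd
    set L := ⨆ n, u n with hLdef
    have hL1 : L ≤ 1 := ciSup_le fun n => (hmem n).2
    have hLq : q ≤ L := by
      have := le_ciSup hbdd 0
      simpa [hu] using this
    have hfixL : hmap L = L := by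
      have h1 : Tendsto (fun n => u (n + 1)) atTop (nhds L) :=
        hL.comp (tendsto_add_atTop_nat 1)
      have h2 : Tendsto (fun n => hmap (u n)) atTop (nhds (hmap L)) :=
        (hmap_cont.tendsto L).comp hL
      have h3 : (fun n => u (n + 1)) = fun n => hmap (u n) := by
        funext n; exact Function.iterate_succ_apply' hmap n q
      rw [h3] at h1
      exact tendsto_nhds_unique h2 h1
    have : L = 1 := fix_high (lt_of_lt_of_le hqp hLq) hL1 hfixL
    rwa [this] at hL
end

section
/- In the game Ab_n(p) (Alice's full move-history matters, only the counts of Bob's two move types matter; outcomes are pairs (a, b) with a ∈ {1,2}^n and b ∈ {(i,j) ∈ ℕ² : i+j = n}, and winners i.i.d. Bernoulli(p)), if p < 1/2 then the probability that Bob has a winning strategy satisfies P^{Ab}_n(p) ≤ (1 − (1−p)^{n+1})^{2^n}, which is the probability that there is no word a ∈ {1,2}^n such that all of the n+1 outcomes (a, b) are wins for Alice (if such a word exists, Alice has a winning strategy), and consequently P^{Ab}_n(p) → 0 as n → ∞. -/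
open Filter

/-- Minimax value of the game `Ab` with `m` rounds remaining: Alice (minimizer,
value `false` = Alice wins) picks a bit, then Bob (maximizer) decides whether to
increment his count; `x` assigns a winner to each pair (Alice's remaining word,
number of type-2 moves Bob plays in the remaining rounds). -/
def valAb : (m : ℕ) → ((Fin m → Bool) → ℕ → Bool) → Bool
  | 0, x => x (fun i => i.elim0) 0
  | m + 1, x =>
      ((valAb m fun f j => x (Fin.cons false f) j) ||
        (valAb m fun f j => x (Fin.cons false f) (j + 1))) &&
      ((valAb m fun f j => x (Fin.cons true f) j) ||
        (valAb m fun f j => x (Fin.cons true f) (j + 1)))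

/-- `PAb n p`: probability that Bob has a winning strategy in the game `Ab_n(p)`,
whose outcomes `(a, k)`, `a ∈ {0,1}^n`, `0 ≤ k ≤ n`, are i.i.d. wins for Bob with
probability `p`. -/
noncomputable def PAb (n : ℕ) (p : ℝ) : ℝ :=
  ∑ x : ((Fin n → Bool) × Fin (n + 1)) → Bool,
    (∏ o : (Fin n → Bool) × Fin (n + 1), if x o then p else 1 - p) *
      (if valAb n (fun f j => if h : j < n + 1 then x (f, ⟨j, h⟩) else false)
        then 1 else 0)

section Aux

open Finset

lemma valAb_eq_false : ∀ (m : ℕ) (x : (Fin m → Bool) → ℕ → Bool) (a : Fin m → Bool),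
    (∀ j ≤ m, x a j = false) → valAb m x = false := by
  intro m
  induction m with
  | zero =>
    intro x a h
    have e : (fun i : Fin 0 => i.elim0) = a := Subsingleton.elim _ _
    simp only [valAb, e]
    exact h 0 le_rfl
  | succ m ih =>
    intro x a h
    have key : ∀ j ≤ m + 1, x (Fin.cons (a 0) (Fin.tail a)) j = false := by
      intro j hj; rw [Fin.cons_self_tail]; exact h j hj
    cases h0 : a 0 with
    | false =>
      rw [h0] at key
      have h1 : valAb m (fun f j => x (Fin.cons false f) j) = false :=
        ih _ (Fin.tail a) fun j hj => key j (le_trans hj (Nat.le_succ m))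
      have h2 : valAb m (fun f j => x (Fin.cons false f) (j + 1)) = false :=
        ih _ (Fin.tail a) fun j hj => key (j + 1) (Nat.succ_le_succ hj)
      simp [valAb, h1, h2]
    | true =>
      rw [h0] at key
      have h1 : valAb m (fun f j => x (Fin.cons true f) j) = false :=
        ih _ (Fin.tail a) fun j hj => key j (le_trans hj (Nat.le_succ m))
      have h2 : valAb m (fun f j => x (Fin.cons true f) (j + 1)) = false :=
        ih _ (Fin.tail a) fun j hj => key (j + 1) (Nat.succ_le_succ hj)
      simp [valAb, h1, h2]

lemma sum_prod_w (p : ℝ) (ι : Type*) [Fintype ι] [DecidableEq ι] :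
    ∑ x : ι → Bool, ∏ i, (if x i then p else 1 - p) = 1 := by
  have := Finset.prod_univ_sum (fun _ : ι => (univ : Finset Bool))
    (fun _ b => if b then p else 1 - p)
  rw [← Fintype.piFinset_univ]; rw [← this]; simp

lemma innerSumW (p : ℝ) (n : ℕ) :
    ∑ z : Fin (n + 1) → Bool,
      (∏ k, if z k then p else 1 - p) * (if ∃ k, z k = true then (1:ℝ) else 0)
      = 1 - (1 - p) ^ (n + 1) := by
  have hz : ∀ z : Fin (n + 1) → Bool,
      (if ∃ k, z k = true then (1:ℝ) else 0) = 1 - (if z = (fun _ => false) then 1 else 0) := by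
    intro z
    by_cases h : z = fun _ => false
    · subst h; simp
    · have : ∃ k, z k = true := by
        by_contra hc; push_neg at hc
        exact h (funext fun k => by simpa using hc k)
      simp [this, h]
  simp_rw [hz, mul_sub, mul_one, Finset.sum_sub_distrib, sum_prod_w, mul_ite, mul_one, mul_zero]
  rw [Finset.sum_ite_eq' (Finset.univ : Finset (Fin (n+1) → Bool)) (fun _ => false)
    (fun z => ∏ k, if z k then p else 1 - p)]
  simp

lemma factorized (p : ℝ) (n : ℕ) :
    ∑ x : ((Fin n → Bool) × Fin (n + 1)) → Bool,
      (∏ o : (Fin n → Bool) × Fin (n + 1), if x o then p else 1 - p) *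
        (if ∀ a, ∃ k, x (a, k) = true then (1:ℝ) else 0)
      = (1 - (1 - p) ^ (n + 1)) ^ 2 ^ n := by
  rw [← Equiv.sum_comp (Equiv.curry (Fin n → Bool) (Fin (n+1)) Bool).symm]
  have step : ∀ y : (Fin n → Bool) → Fin (n + 1) → Bool,
      (∏ o : (Fin n → Bool) × Fin (n + 1),
          if (Equiv.curry (Fin n → Bool) (Fin (n+1)) Bool).symm y o then p else 1 - p) *
        (if ∀ a, ∃ k, (Equiv.curry (Fin n → Bool) (Fin (n+1)) Bool).symm y (a, k) = true
          then (1:ℝ) else 0)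
      = ∏ a : Fin n → Bool,
          ((∏ k, if y a k then p else 1 - p) * (if ∃ k, y a k = true then (1:ℝ) else 0)) := by
    intro y
    rw [Fintype.prod_prod_type (fun o : (Fin n → Bool) × Fin (n+1) =>
      if (Equiv.curry (Fin n → Bool) (Fin (n+1)) Bool).symm y o then p else 1 - p)]
    rw [Finset.prod_mul_distrib, Finset.prod_boole]
    simp [Equiv.curry, Function.uncurry]
    split_ifs with h
    · exact (congrArg₂ (· * ·) rfl (if_pos h)).trans (mul_one _)
    · exact (congrArg₂ (· * ·) rfl (if_neg h)).trans (mul_zero _)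
  simp_rw [step]
  have := Finset.prod_univ_sum (fun _ : Fin n → Bool => (univ : Finset (Fin (n+1) → Bool)))
    (fun _ z => (∏ k, if z k then p else 1 - p) * (if ∃ k, z k = true then (1:ℝ) else 0))
  rw [← Fintype.piFinset_univ, ← this]
  simp_rw [innerSumW]
  rw [Finset.prod_const]
  congr 1
  simp [Finset.card_univ]

lemma PAb_nonneg (n : ℕ) (p : ℝ) (hp0 : 0 ≤ p) (hp1 : p ≤ 1) : 0 ≤ PAb n p := by
  apply Finset.sum_nonneg
  intro x _
  apply mul_nonneg
  · exact Finset.prod_nonneg fun o _ => by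
      by_cases h : x o <;> simp [h, hp0] <;> linarith
  · positivity

lemma PAb_le (n : ℕ) (p : ℝ) (hp0 : 0 ≤ p) (hp1 : p ≤ 1) :
    PAb n p ≤ (1 - (1 - p) ^ (n + 1)) ^ 2 ^ n := by
  rw [← factorized p n]
  apply Finset.sum_le_sum
  intro x _
  apply mul_le_mul_of_nonneg_left
  · by_cases h : ∀ a : Fin n → Bool, ∃ k, x (a, k) = true
    · simp only [if_pos h]
      split <;> norm_num
    · push_neg at h
      obtain ⟨a, ha⟩ := h
      have : valAb n (fun f j => if h : j < n + 1 then x (f, ⟨j, h⟩) else false) = false := by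
        apply valAb_eq_false n _ a
        intro j hj
        have hlt : j < n + 1 := Nat.lt_succ_of_le hj
        simp only [dif_pos hlt]
        simpa using ha ⟨j, hlt⟩
      rw [this]
      positivity
  · exact Finset.prod_nonneg fun o _ => by
      by_cases h : x o <;> simp [h, hp0] <;> linarith

end Aux

/-- for `p < 1/2`, `P^Ab_n(p) ≤ 1 − (1 − (1 − (1−p)^{n+1}))^{2^n}`,
indeed `P^Ab_n(p) ≤ (1 − (1−p)^{n+1})^{2^n}` (the probability that no Alice word `a`
has all its `n+1` outcomes won by Alice), hence `P^Ab_n(p) → 0`; moreover if all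
outcomes in some column `a` are Alice-wins then Alice has a winning strategy. -/
theorem stmt_13 (n : ℕ) (p : ℝ) (hp0 : 0 ≤ p) (hp : p < 1 / 2) :
    PAb n p ≤ 1 - (1 - (1 - (1 - p) ^ (n + 1))) ^ 2 ^ n ∧
    PAb n p ≤ (1 - (1 - p) ^ (n + 1)) ^ 2 ^ n ∧
    Tendsto (fun m => PAb m p) atTop (nhds 0) ∧
    (∀ x : ((Fin n → Bool) × Fin (n + 1)) → Bool,
      (∃ a : Fin n → Bool, ∀ k : Fin (n + 1), x (a, k) = false) →
      valAb n (fun f j => if h : j < n + 1 then x (f, ⟨j, h⟩) else false) = false) := by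
  have hp1 : p ≤ 1 := by linarith
  have hmain : ∀ m : ℕ, PAb m p ≤ (1 - (1 - p) ^ (m + 1)) ^ 2 ^ m :=
    fun m => PAb_le m p hp0 hp1
  have hq : ∀ m : ℕ, 0 ≤ (1 - p) ^ (m + 1) ∧ (1 - p) ^ (m + 1) ≤ 1 := by
    intro m
    exact ⟨pow_nonneg (by linarith) _, pow_le_one₀ (by linarith) (by linarith)⟩
  refine ⟨?_, hmain n, ?_, ?_⟩
  · -- first bound
    have hq0 := (hq n).1
    have hq1 := (hq n).2
    have hN : (1:ℕ) ≤ 2 ^ n := Nat.one_le_two_pow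
    have hNe : 2 ^ n ≠ 0 := (Nat.two_pow_pos n).ne'
    have h1 : (1 - (1 - p) ^ (n + 1)) ^ 2 ^ n ≤ 1 - (1 - p) ^ (n + 1) :=
      pow_le_of_le_one (by linarith) (by linarith) hNe
    have h2 : ((1 - p) ^ (n + 1)) ^ 2 ^ n ≤ (1 - p) ^ (n + 1) :=
      pow_le_of_le_one hq0 hq1 hNe
    have hbase : (1 - (1 - (1 - p) ^ (n + 1))) = (1 - p) ^ (n + 1) := by ring
    rw [hbase]
    calc PAb n p ≤ (1 - (1 - p) ^ (n + 1)) ^ 2 ^ n := hmain n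
      _ ≤ 1 - ((1 - p) ^ (n + 1)) ^ 2 ^ n := by linarith
  · -- tendsto
    have hub : ∀ m : ℕ, PAb m p ≤ Real.exp (-((1 - p) * (2 * (1 - p)) ^ m)) := by
      intro m
      refine le_trans (hmain m) ?_
      have hq0 := (hq m).1
      have hle : 1 - (1 - p) ^ (m + 1) ≤ Real.exp (-(1 - p) ^ (m + 1)) := by
        have := Real.add_one_le_exp (-(1 - p) ^ (m + 1))
        linarith
      have hnn : 0 ≤ 1 - (1 - p) ^ (m + 1) := by linarith [(hq m).2]
      calc (1 - (1 - p) ^ (m + 1)) ^ 2 ^ m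
          ≤ (Real.exp (-(1 - p) ^ (m + 1))) ^ 2 ^ m := pow_le_pow_left₀ hnn hle _
        _ = Real.exp (-((1 - p) * (2 * (1 - p)) ^ m)) := by
            rw [← Real.exp_nat_mul]
            congr 1
            push_cast [mul_pow]
            ring
    have htop : Tendsto (fun m : ℕ => (1 - p) * (2 * (1 - p)) ^ m) atTop atTop := by
      apply Tendsto.const_mul_atTop (by linarith : (0:ℝ) < 1 - p)
      exact tendsto_pow_atTop_atTop_of_one_lt (by linarith)
    have hexp : Tendsto (fun m : ℕ => Real.exp (-((1 - p) * (2 * (1 - p)) ^ m))) atTop (nhds 0) :=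
      Real.tendsto_exp_atBot.comp (tendsto_neg_atTop_atBot.comp htop)
    exact tendsto_of_tendsto_of_tendsto_of_le_of_le tendsto_const_nhds hexp
      (fun m => PAb_nonneg m p hp0 hp1) hub
  · -- Alice's strategy
    intro x ⟨a, ha⟩
    apply valAb_eq_false n _ a
    intro j hj
    have hlt : j < n + 1 := Nat.lt_succ_of_le hj
    simp only [dif_pos hlt]
    exact ha ⟨j, hlt⟩
end

section
/- Let (P_n)_{n≥1} be a sequence of strictly increasing continuous functions P_n : [0,1] → [0,1] with P_n(0)=0, P_n(1)=1, and suppose: (a) for every 0 < ε ≤ 1/2 there is C < ∞ with P_n^{-1}(1−ε) − P_n^{-1}(ε) ≤ C/n for all n ≥ 1; (b) P_{n+1}(P_n^{-1}(1/4)) ≤ 1/4 for all n ≥ 1 (so q_n := P_n^{-1}(1/4) is nondecreasing). Then p_c := lim_n q_n exists in [0,1] and P_n(p) → 0 for all p < p_c while P_n(p) → 1 for all p > p_c. -/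
/-!
The quarter-quantiles `q n = Q n (1/4)` are nondecreasing and bounded, hence converge to some
`pc`. For `0 < ε ≤ 1/4` the quantiles at levels `ε` and `1 - ε` enclose `q n` in a window of
width `O(1/n)`, so they converge to `pc` as well. Hence for `p < pc` eventually `p < Q n ε`,
i.e. `P n p < ε`, and for `p > pc` eventually `Q n (1 - ε) < p`, i.e. `P n p > 1 - ε`.
-/

open Filter Set Topology

theorem StrictMonoOn.le_of_apply_le {α β : Type*} [LinearOrder α] [Preorder β] {f : α → β}
    {s : Set α} {x y : α} {c : β} (hf : StrictMonoOn f s) (hx : x ∈ s) (hy : y ∈ s ∧ f y = c)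
    (h : f x ≤ c) : x ≤ y :=
  (hf.le_iff_le hx hy.1).1 (hy.2 ▸ h)

theorem StrictMonoOn.monotoneOn_of_rightInvOn {α β : Type*} [LinearOrder α] [Preorder β]
    {f : α → β} {g : β → α} {s : Set α} {t : Set β} (hf : StrictMonoOn f s)
    (hg : ∀ y ∈ t, g y ∈ s ∧ f (g y) = y) : MonotoneOn g t := fun a ha b hb hab =>
  hf.le_of_apply_le (hg a ha).1 (hg b hb) ((hg a ha).2.symm ▸ hab)

theorem exists_tendsto_of_le_succ {u : ℕ → ℝ} {a b : ℝ} (hmono : ∀ n, 1 ≤ n → u n ≤ u (n + 1))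
    (hmem : ∀ n, 1 ≤ n → u n ∈ Icc a b) : ∃ l ∈ Icc a b, Tendsto u atTop (𝓝 l) := by
  have hshift : Monotone fun n => u (n + 1) :=
    monotone_nat_of_le_succ fun n => hmono (n + 1) (Nat.le_add_left 1 n)
  have hbdd : BddAbove (range fun n => u (n + 1)) :=
    ⟨b, by rintro _ ⟨n, rfl⟩; exact (hmem (n + 1) (Nat.le_add_left 1 n)).2⟩
  have hlim : Tendsto u atTop (𝓝 (⨆ n, u (n + 1))) :=
    (tendsto_add_atTop_iff_nat 1).1 (tendsto_atTop_ciSup hshift hbdd)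
  refine ⟨_, isClosed_Icc.mem_of_tendsto hlim ?_, hlim⟩
  exact eventually_atTop.2 ⟨1, hmem⟩

theorem tendsto_of_le_of_le_of_sub_le {ι : Type*} {l : Filter ι} {x y z w : ι → ℝ} {c : ℝ}
    (hxy : ∀ᶠ i in l, x i ≤ y i) (hyz : ∀ᶠ i in l, y i ≤ z i)
    (hw : ∀ᶠ i in l, z i - x i ≤ w i) (hw0 : Tendsto w l (𝓝 0)) (hy : Tendsto y l (𝓝 c)) :
    Tendsto x l (𝓝 c) ∧ Tendsto z l (𝓝 c) := by
  have hlower : Tendsto (fun i => y i - w i) l (𝓝 c) := by simpa using hy.sub hw0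
  have hupper : Tendsto (fun i => y i + w i) l (𝓝 c) := by simpa using hy.add hw0
  constructor
  · refine tendsto_of_tendsto_of_tendsto_of_le_of_le' hlower hy ?_ hxy
    filter_upwards [hyz, hw] with i h₁ h₂
    linarith
  · refine tendsto_of_tendsto_of_tendsto_of_le_of_le' hy hupper hyz ?_
    filter_upwards [hxy, hw] with i h₁ h₂
    linarith

theorem tendsto_quantiles_of_window {Q : ℕ → ℝ → ℝ} {θ ε C c : ℝ}
    (hQ : ∀ᶠ n in atTop, MonotoneOn (Q n) (Icc 0 1)) (hε : 0 ≤ ε) (hεθ : ε ≤ θ) (hθε : θ ≤ 1 - ε)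
    (hC : ∀ᶠ n in atTop, Q n (1 - ε) - Q n ε ≤ C / n)
    (hlim : Tendsto (fun n => Q n θ) atTop (𝓝 c)) :
    Tendsto (fun n => Q n ε) atTop (𝓝 c) ∧ Tendsto (fun n => Q n (1 - ε)) atTop (𝓝 c) := by
  have hεmem : ε ∈ Icc (0 : ℝ) 1 := ⟨hε, by linarith⟩
  have hθmem : θ ∈ Icc (0 : ℝ) 1 := ⟨by linarith, by linarith⟩
  have hεmem' : 1 - ε ∈ Icc (0 : ℝ) 1 := ⟨by linarith, by linarith⟩
  refine tendsto_of_le_of_le_of_sub_le ?_ ?_ hC (tendsto_const_div_atTop_nhds_zero_nat C) hlim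
  · filter_upwards [hQ] with n hn using hn hεmem hθmem hεθ
  · filter_upwards [hQ] with n hn using hn hθmem hεmem' hθε

theorem eventually_apply_lt_of_lt_lim {ι : Type*} {l : Filter ι} {P Q : ι → ℝ → ℝ} {s : Set ℝ}
    {p c ε : ℝ} (hP : ∀ᶠ i in l, StrictMonoOn (P i) s)
    (hQ : ∀ᶠ i in l, Q i ε ∈ s ∧ P i (Q i ε) = ε) (hp : p ∈ s)
    (hlim : Tendsto (fun i => Q i ε) l (𝓝 c)) (hpc : p < c) : ∀ᶠ i in l, P i p < ε := by
  filter_upwards [hP, hQ, hlim.eventually_const_lt hpc] with i hPi ⟨hQi, hPQ⟩ hlt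
  exact hPQ ▸ hPi hp hQi hlt

theorem eventually_lt_apply_of_lim_lt {ι : Type*} {l : Filter ι} {P Q : ι → ℝ → ℝ} {s : Set ℝ}
    {p c ε : ℝ} (hP : ∀ᶠ i in l, StrictMonoOn (P i) s)
    (hQ : ∀ᶠ i in l, Q i ε ∈ s ∧ P i (Q i ε) = ε) (hp : p ∈ s)
    (hlim : Tendsto (fun i => Q i ε) l (𝓝 c)) (hcp : c < p) : ∀ᶠ i in l, ε < P i p := by
  filter_upwards [hP, hQ, hlim.eventually_lt_const hcp] with i hPi ⟨hQi, hPQ⟩ hlt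
  exact hPQ ▸ hPi hQi hp hlt

theorem tendsto_zero_of_forall_eventually_lt {ι : Type*} {l : Filter ι} {u : ι → ℝ} {δ : ℝ}
    (hδ : 0 < δ) (hnonneg : ∀ᶠ i in l, 0 ≤ u i)
    (hsmall : ∀ ε, 0 < ε → ε ≤ δ → ∀ᶠ i in l, u i < ε) : Tendsto u l (𝓝 0) := by
  refine tendsto_order.2 ⟨fun a ha => ?_, fun a ha => ?_⟩
  · filter_upwards [hnonneg] with i hi
    linarith
  · filter_upwards [hsmall (min a δ) (lt_min ha hδ) (min_le_right a δ)] with i hi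
    exact hi.trans_le (min_le_left a δ)

theorem tendsto_one_of_forall_eventually_lt {ι : Type*} {l : Filter ι} {u : ι → ℝ} {δ : ℝ}
    (hδ : 0 < δ) (hle : ∀ᶠ i in l, u i ≤ 1)
    (hlarge : ∀ ε, 0 < ε → ε ≤ δ → ∀ᶠ i in l, 1 - ε < u i) : Tendsto u l (𝓝 1) := by
  have h : Tendsto (fun i => 1 - u i) l (𝓝 0) :=
    tendsto_zero_of_forall_eventually_lt hδ (by filter_upwards [hle] with i hi; linarith)
      fun ε hε hεδ => by filter_upwards [hlarge ε hε hεδ] with i hi; linarith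
  simpa using (tendsto_const_nhds (x := (1 : ℝ))).sub h

theorem stmt_19_general (P : ℕ → ℝ → ℝ) (Q : ℕ → ℝ → ℝ)
    (hmono : ∀ n, 1 ≤ n → StrictMonoOn (P n) (Set.Icc 0 1))
    (hmaps : ∀ n, 1 ≤ n → Set.MapsTo (P n) (Set.Icc 0 1) (Set.Icc 0 1))
    (hQ : ∀ n, 1 ≤ n → ∀ q ∈ Set.Icc (0 : ℝ) 1,
      Q n q ∈ Set.Icc (0 : ℝ) 1 ∧ P n (Q n q) = q)
    (hwin : ∀ ε : ℝ, 0 < ε → ε ≤ 1 / 2 →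
      ∃ C : ℝ, ∀ n, 1 ≤ n → Q n (1 - ε) - Q n ε ≤ C / n)
    (hq : ∀ n, 1 ≤ n → P (n + 1) (Q n (1 / 4)) ≤ 1 / 4) :
    ∃ pc ∈ Set.Icc (0 : ℝ) 1,
      Tendsto (fun n => Q n (1 / 4)) atTop (nhds pc) ∧
      (∀ p ∈ Set.Icc (0 : ℝ) 1, p < pc →
        Tendsto (fun n => P n p) atTop (nhds 0)) ∧
      (∀ p ∈ Set.Icc (0 : ℝ) 1, pc < p →
        Tendsto (fun n => P n p) atTop (nhds 1)) := by
  have hquarter : (1 / 4 : ℝ) ∈ Icc (0 : ℝ) 1 := by norm_num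
  have hPev : ∀ᶠ n in atTop, StrictMonoOn (P n) (Icc 0 1) := eventually_atTop.2 ⟨1, hmono⟩
  have hQev : ∀ q ∈ Icc (0 : ℝ) 1, ∀ᶠ n in atTop, Q n q ∈ Icc 0 1 ∧ P n (Q n q) = q :=
    fun q hq' => eventually_atTop.2 ⟨1, fun n hn => hQ n hn q hq'⟩
  obtain ⟨pc, hpc, hlim⟩ := exists_tendsto_of_le_succ (u := fun n => Q n (1 / 4))
    (fun n hn => (hmono (n + 1) (by omega)).le_of_apply_le (hQ n hn _ hquarter).1
      (hQ (n + 1) (by omega) _ hquarter) (hq n hn))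
    fun n hn => (hQ n hn _ hquarter).1
  have hQmono : ∀ᶠ n in atTop, MonotoneOn (Q n) (Icc 0 1) :=
    eventually_atTop.2 ⟨1, fun n hn => (hmono n hn).monotoneOn_of_rightInvOn (hQ n hn)⟩
  have hwindow : ∀ ε : ℝ, 0 < ε → ε ≤ 1 / 4 →
      Tendsto (fun n => Q n ε) atTop (𝓝 pc) ∧ Tendsto (fun n => Q n (1 - ε)) atTop (𝓝 pc) := by
    intro ε hε hε4
    obtain ⟨C, hC⟩ := hwin ε hε (by linarith)
    exact tendsto_quantiles_of_window hQmono hε.le hε4 (by linarith)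
      (eventually_atTop.2 ⟨1, hC⟩) hlim
  refine ⟨pc, hpc, hlim, fun p hp hlt => ?_, fun p hp hgt => ?_⟩
  · refine tendsto_zero_of_forall_eventually_lt (by norm_num : (0 : ℝ) < 1 / 4)
      (eventually_atTop.2 ⟨1, fun n hn => (hmaps n hn hp).1⟩) fun ε hε hε4 => ?_
    exact eventually_apply_lt_of_lt_lim hPev (hQev ε ⟨hε.le, by linarith⟩) hp
      (hwindow ε hε hε4).1 hlt
  · refine tendsto_one_of_forall_eventually_lt (by norm_num : (0 : ℝ) < 1 / 4)
      (eventually_atTop.2 ⟨1, fun n hn => (hmaps n hn hp).2⟩) fun ε hε hε4 => ?_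
    exact eventually_lt_apply_of_lim_lt hPev (hQev (1 - ε) ⟨by linarith, by linarith⟩) hp
      (hwindow ε hε hε4).2 hgt

/-- abstract sharp-threshold argument. If `P n : [0,1] → [0,1]` are
strictly increasing continuous onto maps with inverses `Q n`, the critical window
has width `O(1/n)` (hypothesis `hwin`), and the level-1/4 quantiles `Q n (1/4)` are
nondecreasing (hypothesis `hq`), then `p_c := lim_n Q n (1/4)` exists and
`P n p → 0` for `p < p_c` while `P n p → 1` for `p > p_c`. -/
theorem stmt_19 (P : ℕ → ℝ → ℝ) (Q : ℕ → ℝ → ℝ)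
    (hmono : ∀ n, 1 ≤ n → StrictMonoOn (P n) (Set.Icc 0 1))
    (hcont : ∀ n, 1 ≤ n → ContinuousOn (P n) (Set.Icc 0 1))
    (hmaps : ∀ n, 1 ≤ n → Set.MapsTo (P n) (Set.Icc 0 1) (Set.Icc 0 1))
    (h0 : ∀ n, 1 ≤ n → P n 0 = 0) (h1 : ∀ n, 1 ≤ n → P n 1 = 1)
    (hQ : ∀ n, 1 ≤ n → ∀ q ∈ Set.Icc (0 : ℝ) 1,
      Q n q ∈ Set.Icc (0 : ℝ) 1 ∧ P n (Q n q) = q)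
    (hwin : ∀ ε : ℝ, 0 < ε → ε ≤ 1 / 2 →
      ∃ C : ℝ, ∀ n, 1 ≤ n → Q n (1 - ε) - Q n ε ≤ C / n)
    (hq : ∀ n, 1 ≤ n → P (n + 1) (Q n (1 / 4)) ≤ 1 / 4) :
    ∃ pc ∈ Set.Icc (0 : ℝ) 1,
      Tendsto (fun n => Q n (1 / 4)) atTop (nhds pc) ∧
      (∀ p ∈ Set.Icc (0 : ℝ) 1, p < pc →
        Tendsto (fun n => P n p) atTop (nhds 0)) ∧
      (∀ p ∈ Set.Icc (0 : ℝ) 1, pc < p →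
        Tendsto (fun n => P n p) atTop (nhds 1)) :=
  stmt_19_general P Q hmono hmaps hQ hwin hq
end
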